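/- arXiv:1903.10767 — 9 statements merged into one kernel-verified Lean document; each statement's English description precedes it below -/
import Mathlib

section
/- Let t be a positive real number and let c : ℕ → ℝ be the sequence defined by c(1) = t²/2 and, for every m ≥ 2, c(m) = 2·∑_{k=1}^{m-2} c(k)·c(m-1-k) + 2t·c(m-1). Then for every n ≥ 1 one has c(n) = (1/2)·(2n)!/(n!·(n+1)!)·t^{n+1}. -/
lemma catalan_real (n : ℕ) :
    (catalan n : ℝ) = (Nat.factorial (2 * n) : ℝ) /
      ((Nat.factorial n : ℝ) * (Nat.factorial (n + 1) : ℝ)) := by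
  have key : (n + 1) * catalan n * (Nat.factorial n * Nat.factorial n)
      = Nat.factorial (2 * n) := by
    rw [succ_mul_catalan_eq_centralBinom, Nat.centralBinom]
    have := Nat.choose_mul_factorial_mul_factorial (Nat.le_mul_of_pos_left n (by norm_num) : n ≤ 2 * n)
    simpa [two_mul, mul_assoc] using this
  have hfn : (Nat.factorial n : ℝ) ≠ 0 := by positivity
  have hfn1 : (Nat.factorial (n + 1) : ℝ) ≠ 0 := by positivity
  rw [eq_div_iff (by positivity)]
  have := congrArg (fun x : ℕ => (x : ℝ)) key
  push_cast at this ⊢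
  rw [Nat.factorial_succ]
  push_cast
  nlinarith [this]

lemma cat_rec (m : ℕ) (hm : 2 ≤ m) :
    catalan m = ∑ k ∈ Finset.Icc 1 (m - 2), catalan k * catalan (m - 1 - k)
      + 2 * catalan (m - 1) := by
  obtain ⟨n, rfl⟩ : ∃ n, m = n + 2 := ⟨m - 2, by omega⟩
  simp only [Nat.add_sub_cancel, show n + 2 - 1 = n + 1 from rfl]
  rw [catalan_succ, Fin.sum_univ_eq_sum_range (fun i => catalan i * catalan (n + 1 - i))]
  rw [Finset.sum_range_succ, Finset.sum_range_succ']
  have h1 : ∑ i ∈ Finset.range n, catalan (i + 1) * catalan (n + 1 - (i + 1))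
      = ∑ k ∈ Finset.Icc 1 n, catalan k * catalan (n + 1 - k) := by
    rw [← Finset.Ico_add_one_right_eq_Icc, Finset.sum_Ico_eq_sum_range]
    simp [add_comm 1]
  rw [h1]
  simp [Nat.sub_self, catalan_zero]
  ring

/-- The genus-zero one-point correlators of the modified GUE model with even couplings,
defined by the genus-zero Virasoro recursion, are Catalan numbers times `t^(n+1)/2`. -/
theorem stmt_0 (t : ℝ) (ht : 0 < t) (c : ℕ → ℝ)
    (h1 : c 1 = t ^ 2 / 2)
    (hrec : ∀ m : ℕ, 2 ≤ m →
      c m = 2 * ∑ k ∈ Finset.Icc 1 (m - 2), c k * c (m - 1 - k) + 2 * t * c (m - 1)) :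
    ∀ n : ℕ, 1 ≤ n →
      c n = (1 / 2) * (Nat.factorial (2 * n) : ℝ) /
        ((Nat.factorial n : ℝ) * (Nat.factorial (n + 1) : ℝ)) * t ^ (n + 1) := by
  have key : ∀ n : ℕ, 1 ≤ n → c n = (1 / 2) * (catalan n : ℝ) * t ^ (n + 1) := by
    intro n
    induction n using Nat.strong_induction_on with
    | _ n ih =>
      intro hn
      rcases eq_or_lt_of_le hn with h | h
      · rw [← h, h1, catalan_one]
        push_cast
        ring
      · have h2 : 2 ≤ n := h
        rw [hrec n h2]
        have hsum : ∑ k ∈ Finset.Icc 1 (n - 2), c k * c (n - 1 - k)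
            = 1 / 4 * (∑ k ∈ Finset.Icc 1 (n - 2),
                (catalan k : ℝ) * (catalan (n - 1 - k) : ℝ)) * t ^ (n + 1) := by
          rw [Finset.mul_sum, Finset.sum_mul]
          apply Finset.sum_congr rfl
          intro k hk
          rw [Finset.mem_Icc] at hk
          rw [ih k (by omega) hk.1, ih (n - 1 - k) (by omega) (by omega)]
          rw [show n - 1 - k + 1 = n - k by omega]
          have hpow : t ^ (k + 1) * t ^ (n - k) = t ^ (n + 1) := by
            rw [← pow_add]
            congr 1
            omega
          rw [← hpow]
          ring
        have hcr : (catalan n : ℝ)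
            = ∑ k ∈ Finset.Icc 1 (n - 2), (catalan k : ℝ) * (catalan (n - 1 - k) : ℝ)
              + 2 * (catalan (n - 1) : ℝ) := by
          exact_mod_cast congrArg (fun x : ℕ => (x : ℝ)) (cat_rec n h2)
        rw [hsum, ih (n - 1) (by omega) (by omega), show n - 1 + 1 = n by omega, hcr,
          pow_succ]
        ring
  intro n hn
  rw [key n hn, catalan_real]
  ring
end

section
/- Let t and x be real numbers with x > 4t > 0. Then ∑_{n=1}^∞ (6·(2n)!/((n-1)!·n!·(n+2)))·t^{n+2}·x^{-(n+1)} converges and equals x·( (1 - 2t/x - 2t²/x²)/√(1 - 4t/x) - 1 ). -/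
open Real

noncomputable def cb (n : ℕ) : ℝ := (Nat.centralBinom n : ℝ)

lemma cb_nonneg (n : ℕ) : 0 ≤ cb n := Nat.cast_nonneg _

lemma cb_le (n : ℕ) : cb n ≤ 4 ^ n := by
  have h1 : Nat.centralBinom n ≤ (2 * n + 1).choose n :=
    Nat.choose_le_choose n (by omega)
  have h : Nat.centralBinom n ≤ 4 ^ n := h1.trans (Nat.choose_middle_le_pow n)
  unfold cb
  exact_mod_cast h

lemma cb_succ (n : ℕ) : ((n : ℝ) + 1) * cb (n + 1) = (4 * n + 2) * cb n := by
  have h := congrArg (Nat.cast (R := ℝ)) (Nat.succ_mul_centralBinom_succ n)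
  push_cast at h
  unfold cb
  linarith

lemma summable_f {z : ℝ} (hz : |z| < 4⁻¹) : Summable fun n : ℕ => cb n * z ^ n := by
  apply Summable.of_norm_bounded (g := fun n => (4 * |z|) ^ n)
  · exact summable_geometric_of_lt_one (by positivity) (by linarith)
  · intro n
    rw [norm_mul, norm_pow, mul_pow, Real.norm_eq_abs, Real.norm_eq_abs,
      abs_of_nonneg (cb_nonneg n)]
    gcongr
    exact cb_le n

lemma aux_sum {q : ℝ} (hq : |q| < 1) :
    Summable fun n : ℕ => (n : ℝ) * q ^ (n - 1) * 4 := by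
  rw [← summable_nat_add_iff 1]
  have h1 : Summable fun n : ℕ => (n : ℝ) * q ^ n := by
    simpa using summable_pow_mul_geometric_of_norm_lt_one 1 (by rwa [Real.norm_eq_abs])
  have h2 : Summable fun n : ℕ => q ^ n :=
    summable_geometric_of_norm_lt_one (by rwa [Real.norm_eq_abs])
  apply ((h1.add h2).mul_left 4).congr
  intro n
  simp only [Nat.add_sub_cancel]
  push_cast
  ring

lemma norm_term_le {r y : ℝ} (hy : |y| ≤ r) (n : ℕ) :
    ‖cb n * ((n : ℝ) * y ^ (n - 1))‖ ≤ (n : ℝ) * (4 * r) ^ (n - 1) * 4 := by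
  have hr : 0 ≤ r := (abs_nonneg y).trans hy
  cases n with
  | zero => simp
  | succ m =>
    simp only [Nat.add_sub_cancel]
    rw [norm_mul, norm_mul, norm_pow, Real.norm_eq_abs, Real.norm_eq_abs, Real.norm_eq_abs,
      abs_of_nonneg (cb_nonneg _), Nat.abs_cast]
    have h1 : cb (m+1) ≤ 4 ^ (m+1) := cb_le _
    have h2 : |y| ^ m ≤ r ^ m := pow_le_pow_left₀ (abs_nonneg y) hy m
    push_cast
    calc cb (m+1) * (((m:ℝ)+1) * |y| ^ m) ≤ 4 ^ (m+1) * (((m:ℝ)+1) * r ^ m) := by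
          gcongr
      _ = ((m:ℝ)+1) * (4*r) ^ m * 4 := by rw [mul_pow]; ring

lemma summable_D {z : ℝ} (hz : |z| < 4⁻¹) :
    Summable fun n : ℕ => cb n * ((n : ℝ) * z ^ (n - 1)) := by
  apply Summable.of_norm_bounded (aux_sum (q := 4 * |z|) ?_) (norm_term_le le_rfl)
  rw [abs_of_nonneg (by positivity)]; linarith

lemma hasDerivAt_f {z : ℝ} (hz : |z| < 4⁻¹) :
    HasDerivAt (fun y : ℝ => ∑' n : ℕ, cb n * y ^ n)
      (∑' n : ℕ, cb n * ((n : ℝ) * z ^ (n - 1))) z := by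
  set r : ℝ := (|z| + 4⁻¹) / 2 with hr
  have hzr : |z| < r := by rw [hr]; linarith
  have hr4 : r < 4⁻¹ := by rw [hr]; linarith [abs_nonneg z]
  have hr0 : 0 ≤ r := (abs_nonneg z).trans hzr.le
  have hr0' : 0 < r := by nlinarith [abs_nonneg z]
  have h0r : (0:ℝ) ∈ Set.Ioo (-r) r := by simp only [Set.mem_Ioo]; constructor <;> linarith
  apply hasDerivAt_tsum_of_isPreconnected
    (aux_sum (q := 4 * r) (by rw [abs_of_nonneg (by positivity)]; linarith))
    isOpen_Ioo (isPreconnected_Ioo)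
    (fun n y _ => (hasDerivAt_pow n y).const_mul (cb n))
    (fun n y hy => norm_term_le (le_of_lt (abs_lt.2 ⟨hy.1, hy.2⟩)) n)
    h0r
    (summable_f (show |(0:ℝ)| < 4⁻¹ by norm_num))
    (by rw [Set.mem_Ioo, ← abs_lt]; exact hzr)

lemma summable_nf {z : ℝ} (hz : |z| < 4⁻¹) :
    Summable fun n : ℕ => (n : ℝ) * (cb n * z ^ n) := by
  apply ((summable_D hz).mul_left z).congr
  intro n
  cases n with
  | zero => simp
  | succ m =>
    simp only [Nat.add_sub_cancel]
    push_cast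
    ring

lemma tsum_nf {z : ℝ} (hz : |z| < 4⁻¹) :
    ∑' n : ℕ, (n : ℝ) * (cb n * z ^ n)
      = z * ∑' n : ℕ, cb n * ((n : ℝ) * z ^ (n - 1)) := by
  rw [← tsum_mul_left]
  apply tsum_congr
  intro n
  cases n with
  | zero => simp
  | succ m =>
    simp only [Nat.add_sub_cancel]
    push_cast
    ring

lemma deriv_identity {z : ℝ} (hz : |z| < 4⁻¹) :
    (1 - 4 * z) * (∑' n : ℕ, cb n * ((n : ℝ) * z ^ (n - 1)))
      = 2 * ∑' n : ℕ, cb n * z ^ n := by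
  set D := ∑' n : ℕ, cb n * ((n : ℝ) * z ^ (n - 1)) with hD
  have hsD := summable_D hz
  have hshift : D = ∑' n : ℕ, cb (n + 1) * (((n : ℕ) + 1 : ℝ) * z ^ n) := by
    rw [hD, Summable.tsum_eq_zero_add hsD]
    simp only [Nat.cast_zero, zero_mul, mul_zero, zero_add, Nat.add_sub_cancel, Nat.cast_add,
      Nat.cast_one]
  have hrec : ∀ n : ℕ, cb (n + 1) * (((n : ℕ) + 1 : ℝ) * z ^ n)
      = 4 * ((n : ℝ) * (cb n * z ^ n)) + 2 * (cb n * z ^ n) := by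
    intro n
    linear_combination z ^ n * cb_succ n
  have hsum1 := summable_nf hz
  have hsum2 := summable_f hz
  have : D = 4 * (∑' n : ℕ, (n : ℝ) * (cb n * z ^ n)) + 2 * ∑' n : ℕ, cb n * z ^ n := by
    rw [hshift, tsum_congr hrec, Summable.tsum_add ((hsum1).mul_left 4) ((hsum2).mul_left 2),
      tsum_mul_left, tsum_mul_left]
  rw [tsum_nf hz] at this
  linarith [this]

lemma f_zero : ∑' n : ℕ, cb n * (0:ℝ) ^ n = 1 := by
  rw [tsum_eq_single 0]
  · simp [cb, Nat.centralBinom]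
  · intro n hn
    cases n with
    | zero => exact absurd rfl hn
    | succ m => simp

lemma hasDerivAt_F {x : ℝ} (hx : |x| < 4⁻¹) :
    HasDerivAt (fun y : ℝ => (∑' n : ℕ, cb n * y ^ n) * Real.sqrt (1 - 4 * y)) 0 x := by
  obtain ⟨hx1, hx2⟩ := abs_lt.1 hx
  have hx4 : (0:ℝ) < 1 - 4 * x := by linarith
  have hs : 0 < Real.sqrt (1 - 4 * x) := Real.sqrt_pos.2 hx4
  have hss : Real.sqrt (1 - 4 * x) * Real.sqrt (1 - 4 * x) = 1 - 4 * x :=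
    Real.mul_self_sqrt hx4.le
  have hder : HasDerivAt (fun y : ℝ => 1 - 4 * y) (-4) x := by
    simpa using ((hasDerivAt_id x).const_mul (4:ℝ)).const_sub 1
  have hsq := hder.sqrt (ne_of_gt hx4)
  have hmul := (hasDerivAt_f hx).mul hsq
  have hid := deriv_identity hx
  set s := Real.sqrt (1 - 4 * x) with hsdef
  set D := ∑' n : ℕ, cb n * ((n : ℝ) * x ^ (n - 1))
  set f := ∑' n : ℕ, cb n * x ^ n
  have hval : D * s + f * (-4 / (2 * s)) = 0 := by
    have h2 : D * s + f * (-4 / (2 * s)) = (D * (s * s) - 2 * f) / s := by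
      field_simp
      ring
    rw [h2, hss, div_eq_zero_iff]
    left
    linarith
  refine hmul.congr_deriv ?_
  exact hval

lemma f_eq {z : ℝ} (h0 : 0 ≤ z) (hz : z < 4⁻¹) :
    ∑' n : ℕ, cb n * z ^ n = 1 / Real.sqrt (1 - 4 * z) := by
  have habs : ∀ x : ℝ, x ∈ Set.Icc (0:ℝ) z → |x| < 4⁻¹ := by
    intro x hx
    rw [abs_of_nonneg hx.1]
    exact lt_of_le_of_lt hx.2 hz
  have key := eq_of_has_deriv_right_eq (a := 0) (b := z)
    (f' := fun _ => (0:ℝ))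
    (fun x hx => (hasDerivAt_F (habs x ⟨hx.1, hx.2.le⟩)).hasDerivWithinAt)
    (fun x hx => (hasDerivAt_const x (1:ℝ)).hasDerivWithinAt)
    (fun x hx => (hasDerivAt_F (habs x hx)).continuousAt.continuousWithinAt)
    continuousOn_const
    (by simp [f_zero])
  have hz4 : (0:ℝ) < 1 - 4 * z := by linarith
  have hs : 0 < Real.sqrt (1 - 4 * z) := Real.sqrt_pos.2 hz4
  have hFz := key z ⟨h0, le_rfl⟩
  rw [eq_div_iff (ne_of_gt hs)]
  exact hFz

lemma summable_H {z : ℝ} (hz : |z| < 4⁻¹) :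
    Summable fun n : ℕ => cb n * z ^ (n + 2) / ((n : ℝ) + 2) := by
  apply Summable.of_norm_bounded (g := fun n => (4 * |z|) ^ n * |z| ^ 2)
  · exact (summable_geometric_of_lt_one (by positivity) (by linarith)).mul_right _
  · intro n
    rw [norm_div, norm_mul, norm_pow, Real.norm_eq_abs, Real.norm_eq_abs, Real.norm_eq_abs,
      abs_of_nonneg (cb_nonneg n)]
    have hn2 : (1:ℝ) ≤ |(n:ℝ) + 2| := by
      rw [abs_of_nonneg (by positivity)]; linarith [Nat.cast_nonneg (α := ℝ) n]
    calc cb n * |z| ^ (n + 2) / |(n:ℝ) + 2| ≤ cb n * |z| ^ (n + 2) / 1 :=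
          div_le_div_of_nonneg_left (mul_nonneg (cb_nonneg n) (by positivity))
            one_pos hn2
      _ = cb n * (|z| ^ n * |z| ^ 2) := by rw [div_one, pow_add]
      _ ≤ 4 ^ n * (|z| ^ n * |z| ^ 2) := by gcongr; exact cb_le n
      _ = (4 * |z|) ^ n * |z| ^ 2 := by rw [mul_pow]; ring

lemma hasDerivAt_term_H (n : ℕ) (y : ℝ) :
    HasDerivAt (fun w : ℝ => cb n * w ^ (n + 2) / ((n : ℝ) + 2)) (cb n * y ^ (n + 1)) y := by
  have h := ((hasDerivAt_pow (n + 2) y).const_mul (cb n)).div_const ((n : ℝ) + 2)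
  refine h.congr_deriv ?_
  have hn2 : ((n : ℝ) + 2) ≠ 0 := by positivity
  push_cast
  field_simp

lemma hasDerivAt_H {z : ℝ} (hz : |z| < 4⁻¹) :
    HasDerivAt (fun y : ℝ => ∑' n : ℕ, cb n * y ^ (n + 2) / ((n : ℝ) + 2))
      (∑' n : ℕ, cb n * z ^ (n + 1)) z := by
  set r : ℝ := (|z| + 4⁻¹) / 2 with hr
  have hzr : |z| < r := by rw [hr]; linarith
  have hr4 : r < 4⁻¹ := by rw [hr]; linarith [abs_nonneg z]
  have hr0' : 0 < r := by rw [hr]; positivity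
  have h0r : (0:ℝ) ∈ Set.Ioo (-r) r := by
    simp only [Set.mem_Ioo]; constructor <;> linarith
  apply hasDerivAt_tsum_of_isPreconnected
    (u := fun n => (4 * r) ^ n * r)
    ((summable_geometric_of_lt_one (by positivity) (by linarith)).mul_right r)
    isOpen_Ioo isPreconnected_Ioo
    (fun n y _ => hasDerivAt_term_H n y)
    ?_ h0r ?_ (by rw [Set.mem_Ioo, ← abs_lt]; exact hzr)
  · intro n y hy
    have hyr : |y| ≤ r := (abs_lt.2 ⟨hy.1, hy.2⟩).le
    rw [norm_mul, norm_pow, Real.norm_eq_abs, Real.norm_eq_abs, abs_of_nonneg (cb_nonneg n)]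
    calc cb n * |y| ^ (n + 1) ≤ 4 ^ n * r ^ (n + 1) := by
          apply mul_le_mul (cb_le n) (pow_le_pow_left₀ (abs_nonneg y) hyr _) (by positivity)
            (by positivity)
      _ = (4 * r) ^ n * r := by rw [mul_pow, pow_succ]; ring
  · apply summable_of_ne_finset_zero (s := {0})
    intro n hn
    have : n ≠ 0 := by simpa using hn
    simp [zero_pow, this]

lemma tsum_pow_succ {z : ℝ} :
    ∑' n : ℕ, cb n * z ^ (n + 1) = z * ∑' n : ℕ, cb n * z ^ n := by
  rw [← tsum_mul_left]
  apply tsum_congr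
  intro n
  rw [pow_succ]
  ring

lemma hasDerivAt_phi {x : ℝ} (hx : |x| < 4⁻¹) :
    HasDerivAt (fun y : ℝ => 1/12 - Real.sqrt (1 - 4*y)/8 + Real.sqrt (1 - 4*y)^3/24)
      (x / Real.sqrt (1 - 4*x)) x := by
  obtain ⟨hx1, hx2⟩ := abs_lt.1 hx
  have hx4 : (0:ℝ) < 1 - 4 * x := by linarith
  have hs : 0 < Real.sqrt (1 - 4 * x) := Real.sqrt_pos.2 hx4
  have hss : Real.sqrt (1 - 4 * x) * Real.sqrt (1 - 4 * x) = 1 - 4 * x :=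
    Real.mul_self_sqrt hx4.le
  have hder : HasDerivAt (fun y : ℝ => 1 - 4 * y) (-4) x := by
    simpa using ((hasDerivAt_id x).const_mul (4:ℝ)).const_sub 1
  have hsq := hder.sqrt (ne_of_gt hx4)
  have h1 := (hsq.div_const 8).const_sub (1/12 : ℝ)
  have h2 := (hsq.pow 3).div_const 24
  have h3 := h1.add h2
  refine h3.congr_deriv ?_
  set s := Real.sqrt (1 - 4 * x)
  have h4 : s ^ (3 - 1) = s * s := by norm_num [pow_two]
  rw [h4, hss]
  field_simp
  ring

lemma H_eq {z : ℝ} (h0 : 0 ≤ z) (hz : z < 4⁻¹) :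
    ∑' n : ℕ, cb n * z ^ (n + 2) / ((n : ℝ) + 2)
      = 1/12 - Real.sqrt (1 - 4*z)/8 + Real.sqrt (1 - 4*z)^3/24 := by
  have habs : ∀ x : ℝ, x ∈ Set.Icc (0:ℝ) z → |x| < 4⁻¹ := by
    intro x hx
    rw [abs_of_nonneg hx.1]
    exact lt_of_le_of_lt hx.2 hz
  have hderH : ∀ x : ℝ, x ∈ Set.Icc (0:ℝ) z →
      HasDerivAt (fun y : ℝ => ∑' n : ℕ, cb n * y ^ (n + 2) / ((n : ℝ) + 2))
        (x / Real.sqrt (1 - 4*x)) x := by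
    intro x hx
    have h := hasDerivAt_H (habs x hx)
    rwa [tsum_pow_succ, f_eq hx.1 (lt_of_le_of_lt hx.2 hz), mul_one_div] at h
  have key := eq_of_has_deriv_right_eq (a := 0) (b := z)
    (f' := fun x => x / Real.sqrt (1 - 4*x))
    (fun x hx => (hderH x ⟨hx.1, hx.2.le⟩).hasDerivWithinAt)
    (fun x hx => (hasDerivAt_phi (habs x ⟨hx.1, hx.2.le⟩)).hasDerivWithinAt)
    (fun x hx => (hderH x hx).continuousAt.continuousWithinAt)
    (fun x hx => (hasDerivAt_phi (habs x hx)).continuousAt.continuousWithinAt)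
    (by norm_num)
  exact key z ⟨h0, le_rfl⟩


/-- Generating function of the correlators `⟨p₄ p_{2n}⟩₀ = 6·(2n)!/((n-1)!·n!·(n+2))·t^{n+2}`:
`∑_{n=1}^∞ 6·(2n)!/((n-1)!·n!·(n+2))·t^{n+2}·x^{-(n+1)}
  = x·((1 - 2t/x - 2t²/x²)/√(1-4t/x) - 1)`,
with the series indexed by `n = m + 1`, `m : ℕ`. -/
theorem stmt_3 (t x : ℝ) (ht : 0 < t) (hx : 4 * t < x) :
    HasSum (fun m : ℕ =>
      6 * (Nat.factorial (2 * (m + 1)) : ℝ) /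
        ((Nat.factorial m : ℝ) * (Nat.factorial (m + 1) : ℝ) * ((m : ℝ) + 3)) *
      t ^ (m + 3) / x ^ (m + 2))
      (x * ((1 - 2 * t / x - 2 * t ^ 2 / x ^ 2) / Real.sqrt (1 - 4 * t / x) - 1)) := by
  have hx0 : 0 < x := lt_trans (by linarith) hx
  set z := t / x with hzdef
  have hz0 : 0 < z := div_pos ht hx0
  have hz4 : z < 4⁻¹ := by
    rw [hzdef, div_lt_iff₀ hx0]
    linarith
  have habs : |z| < 4⁻¹ := by rw [abs_of_pos hz0]; exact hz4
  set s := Real.sqrt (1 - 4 * z) with hsdef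
  have h14 : 0 < 1 - 4 * z := by linarith
  have hspos : 0 < s := Real.sqrt_pos.2 h14
  have hss : s * s = 1 - 4 * z := Real.mul_self_sqrt h14.le
  have h1 : HasSum (fun n : ℕ => cb n * z ^ n) (1 / s) := by
    have h := (summable_f habs).hasSum
    rwa [f_eq hz0.le hz4] at h
  have h2 : HasSum (fun n : ℕ => cb n * z ^ (n + 2) / ((n : ℝ) + 2))
      (1/12 - s/8 + s^3/24) := by
    have h := (summable_H habs).hasSum
    rwa [H_eq hz0.le hz4] at h
  have h1' : HasSum (fun m : ℕ => cb (m + 1) * z ^ (m + 1)) (1 / s - 1) := by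
    have h := (hasSum_nat_add_iff' (f := fun n : ℕ => cb n * z ^ n) 1).2 h1
    have hv : 1 / s - ∑ i ∈ Finset.range 1, cb i * z ^ i = 1 / s - 1 := by
      simp [cb]
    rwa [hv] at h
  have h2' : HasSum (fun m : ℕ => cb (m + 1) * z ^ (m + 3) / ((m : ℝ) + 3))
      (1/12 - s/8 + s^3/24 - z^2/2) := by
    have hfe : (fun m : ℕ => cb (m + 1) * z ^ (m + 3) / ((m : ℝ) + 3))
        = (fun m : ℕ => cb (m + 1) * z ^ ((m + 1) + 2) / (((m + 1 : ℕ) : ℝ) + 2)) := by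
      funext m
      push_cast
      ring
    rw [hfe]
    have h := (hasSum_nat_add_iff'
      (f := fun n : ℕ => cb n * z ^ (n + 2) / ((n : ℝ) + 2)) 1).2 h2
    have hv : 1/12 - s/8 + s^3/24
        - ∑ i ∈ Finset.range 1, cb i * z ^ (i + 2) / ((i : ℝ) + 2)
        = 1/12 - s/8 + s^3/24 - z^2/2 := by
      simp [cb]
    rwa [hv] at h
  have hC := ((h1'.mul_left (6 * z^2)).sub (h2'.mul_left 12)).mul_left x
  have hfe2 : (fun m : ℕ => x * (6 * z^2 * (cb (m + 1) * z ^ (m + 1))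
        - 12 * (cb (m + 1) * z ^ (m + 3) / ((m : ℝ) + 3))))
      = (fun m : ℕ => 6 * (Nat.factorial (2 * (m + 1)) : ℝ) /
        ((Nat.factorial m : ℝ) * (Nat.factorial (m + 1) : ℝ) * ((m : ℝ) + 3)) *
        t ^ (m + 3) / x ^ (m + 2)) := by
    funext m
    have hfact : ((2 * (m + 1)).factorial : ℝ)
        = cb (m + 1) * ((m + 1).factorial : ℝ) * ((m + 1).factorial : ℝ) := by
      have h := Nat.choose_mul_factorial_mul_factorial (show m + 1 ≤ 2 * (m + 1) by omega)
      have h2 : 2 * (m + 1) - (m + 1) = m + 1 := by omega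
      rw [h2] at h
      have := congrArg (Nat.cast (R := ℝ)) h
      push_cast at this
      rw [← this]
      unfold cb Nat.centralBinom
      push_cast
      ring
    have ht' : t = z * x := by rw [hzdef]; field_simp
    have hm3 : ((m : ℝ) + 3) ≠ 0 := by positivity
    have hfm : ((m.factorial : ℝ)) ≠ 0 := Nat.cast_ne_zero.2 m.factorial_ne_zero
    have hfm1 : (((m + 1).factorial : ℝ)) ≠ 0 := Nat.cast_ne_zero.2 (m + 1).factorial_ne_zero
    have hfact1 : (((m + 1).factorial : ℝ)) = ((m : ℝ) + 1) * (m.factorial : ℝ) := by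
      rw [Nat.factorial_succ]
      push_cast
      ring
    rw [hfact, ht', hfact1]
    field_simp
    ring
  have hs3 : s ^ 3 = (1 - 4 * z) * s := by
    rw [pow_succ, pow_two, hss]
  have hval0 : x * (6 * z^2 * (1 / s - 1) - 12 * (1/12 - s/8 + s^3/24 - z^2/2))
      = x * ((1 - 2 * z - 2 * z ^ 2) / s - 1) := by
    rw [hs3]
    have hu : s * s⁻¹ = 1 := mul_inv_cancel₀ hspos.ne'
    linear_combination (x * (1 + 2 * z) * s⁻¹) * hss - (x * (1 + 2 * z) * s) * hu
  have hval : x * (6 * z^2 * (1 / s - 1) - 12 * (1/12 - s/8 + s^3/24 - z^2/2))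
      = x * ((1 - 2 * t / x - 2 * t ^ 2 / x ^ 2) / Real.sqrt (1 - 4 * t / x) - 1) := by
    have e1 : 1 - 4 * t / x = 1 - 4 * z := by rw [hzdef]; ring
    have e2 : 1 - 2 * t / x - 2 * t ^ 2 / x ^ 2 = 1 - 2 * z - 2 * z ^ 2 := by
      rw [hzdef]
      ring
    rw [hval0, e1, e2, hsdef]
  rw [hfe2, hval] at hC
  exact hC
end

section
/- Let n ≥ 0 be an integer and a a nonzero real number. Then on the set of real x with 1 + 4ax > 0, the derivative of F(x) = ( √(1+4ax) / ((n+1)·binom(2n+2, n+1)·a^{n+1}) ) · ∑_{j=0}^n (-1)^{n-j}·binom(2j, j)·a^j·x^j equals x^n/√(1+4ax). -/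
lemma cb_nat (n : ℕ) :
    (n + 2) * Nat.choose (2 * n + 4) (n + 2) = (4 * n + 6) * Nat.choose (2 * n + 2) (n + 1) := by
  have h := Nat.succ_mul_centralBinom_succ (n + 1)
  simp only [Nat.centralBinom] at h
  have e1 : 2 * (n + 1 + 1) = 2 * n + 4 := by ring
  have e2 : 2 * (n + 1) = 2 * n + 2 := by ring
  rw [e1, e2] at h
  rw [show n + 2 = n + 1 + 1 from rfl]
  rw [h]; ring

lemma cb_real (n : ℕ) :
    ((n : ℝ) + 2) * (Nat.choose (2 * n + 4) (n + 2) : ℝ)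
      = (4 * (n : ℝ) + 6) * (Nat.choose (2 * n + 2) (n + 1) : ℝ) := by
  exact_mod_cast cb_nat n

lemma key_id (a x : ℝ) (n : ℕ) :
    2 * a * (∑ j ∈ Finset.range (n + 1),
        (-1 : ℝ) ^ (n - j) * (Nat.choose (2 * j) j : ℝ) * a ^ j * x ^ j)
      + (1 + 4 * a * x) * (∑ j ∈ Finset.range (n + 1),
        (-1 : ℝ) ^ (n - j) * (Nat.choose (2 * j) j : ℝ) * a ^ j * (j * x ^ (j - 1)))
      = ((n : ℝ) + 1) * (Nat.choose (2 * n + 2) (n + 1) : ℝ) * a ^ (n + 1) * x ^ n := by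
  induction n with
  | zero => simp
  | succ n ih =>
    have hT : (∑ j ∈ Finset.range (n + 1 + 1),
        (-1 : ℝ) ^ (n + 1 - j) * (Nat.choose (2 * j) j : ℝ) * a ^ j * x ^ j)
        = (Nat.choose (2 * n + 2) (n + 1) : ℝ) * a ^ (n + 1) * x ^ (n + 1)
          - ∑ j ∈ Finset.range (n + 1),
            (-1 : ℝ) ^ (n - j) * (Nat.choose (2 * j) j : ℝ) * a ^ j * x ^ j := by
      rw [Finset.sum_range_succ]
      have h1 : ∑ j ∈ Finset.range (n + 1),
          (-1 : ℝ) ^ (n + 1 - j) * (Nat.choose (2 * j) j : ℝ) * a ^ j * x ^ j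
          = ∑ j ∈ Finset.range (n + 1),
            -((-1 : ℝ) ^ (n - j) * (Nat.choose (2 * j) j : ℝ) * a ^ j * x ^ j) :=
        Finset.sum_congr rfl fun j hj => by
          rw [Nat.succ_sub (Finset.mem_range_succ_iff.mp hj), pow_succ]; ring
      rw [h1, Finset.sum_neg_distrib, Nat.sub_self,
        show 2 * (n + 1) = 2 * n + 2 from by ring]
      ring
    have hD : (∑ j ∈ Finset.range (n + 1 + 1),
        (-1 : ℝ) ^ (n + 1 - j) * (Nat.choose (2 * j) j : ℝ) * a ^ j * (j * x ^ (j - 1)))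
        = (Nat.choose (2 * n + 2) (n + 1) : ℝ) * a ^ (n + 1) * (((n : ℝ) + 1) * x ^ n)
          - ∑ j ∈ Finset.range (n + 1),
            (-1 : ℝ) ^ (n - j) * (Nat.choose (2 * j) j : ℝ) * a ^ j * (j * x ^ (j - 1)) := by
      rw [Finset.sum_range_succ]
      have h1 : ∑ j ∈ Finset.range (n + 1),
          (-1 : ℝ) ^ (n + 1 - j) * (Nat.choose (2 * j) j : ℝ) * a ^ j * ((j : ℝ) * x ^ (j - 1))
          = ∑ j ∈ Finset.range (n + 1),
            -((-1 : ℝ) ^ (n - j) * (Nat.choose (2 * j) j : ℝ) * a ^ j * ((j : ℝ) * x ^ (j - 1))) :=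
        Finset.sum_congr rfl fun j hj => by
          rw [Nat.succ_sub (Finset.mem_range_succ_iff.mp hj), pow_succ]; ring
      rw [h1, Finset.sum_neg_distrib, Nat.sub_self,
        show 2 * (n + 1) = 2 * n + 2 from by ring]
      push_cast
      ring
    rw [hT, hD, show 2 * (n + 1) + 2 = 2 * n + 4 from by ring,
      show n + 1 + 1 = n + 2 from rfl]
    push_cast
    linear_combination (-1 : ℝ) * ih - a ^ (n + 2) * x ^ (n + 1) * cb_real n

/-- Integration lemma: a closed-form antiderivative of `xⁿ/√(1+4ax)` on `{x | 1+4ax > 0}`. -/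
theorem stmt_7 (n : ℕ) (a : ℝ) (ha : a ≠ 0) (x : ℝ) (hx : 0 < 1 + 4 * a * x) :
    HasDerivAt (fun x : ℝ =>
      Real.sqrt (1 + 4 * a * x) /
        (((n : ℝ) + 1) * (Nat.choose (2 * n + 2) (n + 1) : ℝ) * a ^ (n + 1)) *
      ∑ j ∈ Finset.range (n + 1),
        (-1 : ℝ) ^ (n - j) * (Nat.choose (2 * j) j : ℝ) * a ^ j * x ^ j)
      (x ^ n / Real.sqrt (1 + 4 * a * x)) x := by
  have hsp : 0 < Real.sqrt (1 + 4 * a * x) := Real.sqrt_pos.mpr hx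
  have hs : Real.sqrt (1 + 4 * a * x) ≠ 0 := ne_of_gt hsp
  have hC : ((n : ℝ) + 1) * (Nat.choose (2 * n + 2) (n + 1) : ℝ) * a ^ (n + 1) ≠ 0 := by
    refine mul_ne_zero (mul_ne_zero ?_ ?_) (pow_ne_zero _ ha)
    · positivity
    · exact_mod_cast (Nat.choose_pos (by omega : n + 1 ≤ 2 * n + 2)).ne'
  have h1 : HasDerivAt (fun x : ℝ => Real.sqrt (1 + 4 * a * x))
      (2 * a / Real.sqrt (1 + 4 * a * x)) x := by
    have hu : HasDerivAt (fun x : ℝ => 1 + 4 * a * x) (4 * a) x := by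
      simpa using ((hasDerivAt_id x).const_mul (4 * a)).const_add 1
    have := (Real.hasDerivAt_sqrt (ne_of_gt hx)).comp x hu
    refine this.congr_deriv ?_
    rw [div_mul_eq_mul_div, one_mul, div_eq_div_iff (mul_ne_zero two_ne_zero hs) hs]
    ring
  have h2 : HasDerivAt (fun x : ℝ => ∑ j ∈ Finset.range (n + 1),
        (-1 : ℝ) ^ (n - j) * (Nat.choose (2 * j) j : ℝ) * a ^ j * x ^ j)
      (∑ j ∈ Finset.range (n + 1),
        (-1 : ℝ) ^ (n - j) * (Nat.choose (2 * j) j : ℝ) * a ^ j * ((j : ℝ) * x ^ (j - 1))) x := by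
    apply HasDerivAt.fun_sum
    intro j hj
    exact (hasDerivAt_pow j x).const_mul ((-1 : ℝ) ^ (n - j) * (Nat.choose (2 * j) j : ℝ) * a ^ j)
  set C : ℝ := ((n : ℝ) + 1) * (Nat.choose (2 * n + 2) (n + 1) : ℝ) * a ^ (n + 1) with hCdef
  set S : ℝ := ∑ j ∈ Finset.range (n + 1),
      (-1 : ℝ) ^ (n - j) * (Nat.choose (2 * j) j : ℝ) * a ^ j * x ^ j with hSdef
  set D : ℝ := ∑ j ∈ Finset.range (n + 1),
      (-1 : ℝ) ^ (n - j) * (Nat.choose (2 * j) j : ℝ) * a ^ j * ((j : ℝ) * x ^ (j - 1)) with hDdef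
  have h3 := (h1.mul h2).div_const C
  have hmul : Real.sqrt (1 + 4 * a * x) * Real.sqrt (1 + 4 * a * x) = 1 + 4 * a * x :=
    Real.mul_self_sqrt hx.le
  have key : 2 * a * S + (1 + 4 * a * x) * D = C * x ^ n := by
    rw [hSdef, hDdef, hCdef]
    exact key_id a x n
  have hval : (2 * a / Real.sqrt (1 + 4 * a * x) * S + Real.sqrt (1 + 4 * a * x) * D) / C
      = x ^ n / Real.sqrt (1 + 4 * a * x) := by
    rw [div_eq_div_iff hC hs, div_mul_eq_mul_div, add_mul, div_mul_cancel₀ _ hs]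
    linear_combination key + D * hmul
  simp only [div_mul_eq_mul_div]
  exact hval ▸ h3
end

section
/- Let t > 0, let k ≥ 0 be an integer, and let ζ be a real number with 0 < ζ² < 4t. Write (2m+1)!! = (2m+1)!/(2^m·m!) and (2m-1)!! = (2m)!/(2^m·m!). Then the series ∑_{l=0}^∞ ((-1)^{k+l+1}·(2k+1)!!·(2l+1)!!/(2^{3k+3l+3}·(k+l+1)·k!·l!·t^{k+l+1}))·ζ^{2l+1}/(2l+1) converges, and ((2k-1)!!/2^k)·( ζ^{-(2k+1)} - ∑_{l=0}^∞ ((-1)^{k+l+1}·(2k+1)!!·(2l+1)!!/(2^{3k+3l+3}·(k+l+1)·k!·l!·t^{k+l+1}))·ζ^{2l+1}/(2l+1) ) = ((2k-1)!!/2^k)·(√(1+ζ²/(4t))/ζ^{2k+1})·∑_{j=0}^k (-1)^j·binom(2j, j)·ζ^{2j}/(2^{4j}·t^j). -/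
open Finset Set MeasureTheory intervalIntegral


lemma stmt8_cb_le (n : ℕ) : (Nat.centralBinom n : ℝ) ≤ 4 ^ n := by
  have h1 : Nat.centralBinom n ≤ ∑ m ∈ Finset.range (2 * n + 1), (2 * n).choose m := by
    rw [Nat.centralBinom_eq_two_mul_choose]
    exact Finset.single_le_sum (fun i _ => Nat.zero_le _) (Finset.mem_range.2 (by omega))
  have h2 : (∑ m ∈ Finset.range (2 * n + 1), (2 * n).choose m) = 4 ^ n := by
    rw [Nat.sum_range_choose, pow_mul]; norm_num
  have := h1.trans_eq h2
  exact_mod_cast this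

lemma stmt8_rec (l : ℕ) :
    ((l : ℝ) + 1) * ((-1 : ℝ) ^ (l + 1) * (Nat.centralBinom (l + 1) : ℝ))
      + (4 * (l : ℝ) + 2) * ((-1 : ℝ) ^ l * (Nat.centralBinom l : ℝ)) = 0 := by
  have hr : ((l : ℝ) + 1) * (Nat.centralBinom (l + 1) : ℝ)
      = 2 * (2 * (l : ℝ) + 1) * (Nat.centralBinom l : ℝ) := by
    exact_mod_cast Nat.succ_mul_centralBinom_succ l
  rw [pow_succ]
  linear_combination (-(-1 : ℝ) ^ l) * hr

lemma stmt8_summable {b y : ℝ} (hb : 4 * b < 1) (hy : |y| ≤ b) :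
    Summable (fun l : ℕ => (-1 : ℝ) ^ l * (Nat.centralBinom l : ℝ) * y ^ l) := by
  have hb0 : 0 ≤ b := le_trans (abs_nonneg y) hy
  have hgeom : Summable (fun l : ℕ => (4 : ℝ) ^ l * b ^ l) :=
    (summable_geometric_of_lt_one (r := 4 * b) (by positivity) hb).congr
      (fun l => mul_pow 4 b l)
  refine Summable.of_norm_bounded hgeom (fun l => ?_)
  have h1 : ‖(-1 : ℝ) ^ l * (Nat.centralBinom l : ℝ) * y ^ l‖
      = (Nat.centralBinom l : ℝ) * |y| ^ l := by
    simp [norm_mul, norm_pow, abs_of_nonneg, Nat.cast_nonneg]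
  rw [h1]
  exact mul_le_mul (stmt8_cb_le l) (pow_le_pow_left₀ (abs_nonneg y) hy l)
    (by positivity) (by positivity)

lemma stmt8_summable_deriv {b : ℝ} (hb0 : 0 ≤ b) (hb : 4 * b < 1) :
    Summable (fun l : ℕ => (4 : ℝ) ^ l * l * b ^ (l - 1)) := by
  rw [← summable_nat_add_iff 1]
  have h1 : Summable (fun l : ℕ => (l : ℝ) * (4 * b) ^ l) :=
    (summable_pow_mul_geometric_of_norm_lt_one (r := 4 * b) 1 (by
      rw [Real.norm_eq_abs, abs_of_nonneg (by positivity)]; exact hb)).congr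
      (fun l => by push_cast; ring)
  have h2 : Summable (fun l : ℕ => ((4 : ℝ) * b) ^ l) :=
    summable_geometric_of_lt_one (by positivity) hb
  refine ((h1.add h2).mul_left 4).congr (fun l => ?_)
  push_cast
  rw [mul_pow]
  ring


lemma stmt8_hasSum_central {x : ℝ} (hx0 : 0 ≤ x) (hx : x < 1/4) :
    HasSum (fun l : ℕ => (-1 : ℝ) ^ l * (Nat.centralBinom l : ℝ) * x ^ l)
      (1 / Real.sqrt (1 + 4 * x)) := by
  set b : ℝ := x / 2 + 1 / 8 with hbdef
  have hxb : x < b := by rw [hbdef]; linarith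
  have hb0 : 0 < b := by rw [hbdef]; linarith
  have hb4 : 4 * b < 1 := by rw [hbdef]; linarith
  set T : Set ℝ := Set.Ioo (-b) b with hTdef
  set f : ℝ → ℝ := fun z => ∑' l : ℕ, (-1 : ℝ) ^ l * (Nat.centralBinom l : ℝ) * z ^ l with hfdef
  set D : ℝ → ℝ := fun z => ∑' l : ℕ,
      (-1 : ℝ) ^ l * (Nat.centralBinom l : ℝ) * ((l : ℝ) * z ^ (l - 1)) with hDdef
  have habs : ∀ y ∈ T, |y| ≤ b := fun y hy => (abs_lt.2 ⟨hy.1, hy.2⟩).le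
  have hsum : ∀ y ∈ T, Summable (fun l : ℕ => (-1 : ℝ) ^ l * (Nat.centralBinom l : ℝ) * y ^ l) :=
    fun y hy => stmt8_summable hb4 (habs y hy)
  have hg : ∀ (l : ℕ), ∀ y ∈ T,
      HasDerivAt (fun z : ℝ => (-1 : ℝ) ^ l * (Nat.centralBinom l : ℝ) * z ^ l)
      ((-1 : ℝ) ^ l * (Nat.centralBinom l : ℝ) * ((l : ℝ) * y ^ (l - 1))) y :=
    fun l y _ => (hasDerivAt_pow l y).const_mul _
  have hg' : ∀ (l : ℕ), ∀ y ∈ T,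
      ‖(-1 : ℝ) ^ l * (Nat.centralBinom l : ℝ) * ((l : ℝ) * y ^ (l - 1))‖
        ≤ (4 : ℝ) ^ l * l * b ^ (l - 1) := by
    intro l y hy
    have h1 : ‖(-1 : ℝ) ^ l * (Nat.centralBinom l : ℝ) * ((l : ℝ) * y ^ (l - 1))‖
        = (Nat.centralBinom l : ℝ) * ((l : ℝ) * |y| ^ (l - 1)) := by
      simp [norm_mul, norm_pow, abs_of_nonneg, Nat.cast_nonneg]
    rw [h1]
    have h2 : |y| ^ (l - 1) ≤ b ^ (l - 1) := pow_le_pow_left₀ (abs_nonneg y) (habs y hy) _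
    calc (Nat.centralBinom l : ℝ) * ((l : ℝ) * |y| ^ (l - 1))
        ≤ (4 : ℝ) ^ l * ((l : ℝ) * b ^ (l - 1)) := by
          apply mul_le_mul (stmt8_cb_le l) _ (by positivity) (by positivity)
          exact mul_le_mul_of_nonneg_left h2 (Nat.cast_nonneg l)
      _ = (4 : ℝ) ^ l * l * b ^ (l - 1) := by ring
  have h0T : (0 : ℝ) ∈ T := ⟨by linarith, hb0⟩
  have hderivf : ∀ y ∈ T, HasDerivAt f (D y) y := fun y hy =>
    hasDerivAt_tsum_of_isPreconnected (stmt8_summable_deriv hb0.le hb4)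
      isOpen_Ioo (convex_Ioo _ _).isPreconnected hg hg' h0T (hsum 0 h0T) hy
  have hODE : ∀ y ∈ T, (1 + 4 * y) * D y + 2 * f y = 0 := by
    intro y hy
    have hsD : Summable (fun l : ℕ =>
        (-1 : ℝ) ^ l * (Nat.centralBinom l : ℝ) * ((l : ℝ) * y ^ (l - 1))) :=
      Summable.of_norm_bounded (stmt8_summable_deriv hb0.le hb4) (fun l => hg' l y hy)
    have hA : Summable (fun l : ℕ =>
        (-1 : ℝ) ^ (l + 1) * (Nat.centralBinom (l + 1) : ℝ) * (((l : ℝ) + 1) * y ^ l)) := by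
      refine ((summable_nat_add_iff 1).2 hsD).congr (fun l => ?_)
      push_cast
      norm_num
    have hsf := hsum y hy
    have hB : Summable (fun l : ℕ =>
        4 * ((-1 : ℝ) ^ l * (Nat.centralBinom l : ℝ) * (l : ℝ)) * y ^ l) := by
      refine (hsD.mul_left (4 * y)).congr (fun l => ?_)
      cases l with
      | zero => simp
      | succ m =>
        have hm : (m + 1 : ℕ) - 1 = m := rfl
        rw [hm]
        push_cast
        ring
    have hC : Summable (fun l : ℕ =>
        2 * ((-1 : ℝ) ^ l * (Nat.centralBinom l : ℝ)) * y ^ l) :=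
      (hsf.mul_left 2).congr (fun l => by ring)
    have hDshift : D y = ∑' l : ℕ,
        (-1 : ℝ) ^ (l + 1) * (Nat.centralBinom (l + 1) : ℝ) * (((l : ℝ) + 1) * y ^ l) := by
      have h0 : D y = ∑' l : ℕ, (-1 : ℝ) ^ l * (Nat.centralBinom l : ℝ) * ((l : ℝ) * y ^ (l - 1)) := rfl
      rw [h0, Summable.tsum_eq_zero_add hsD]
      simp only [Nat.cast_zero, zero_mul, mul_zero, pow_zero, one_mul, zero_add]
      exact tsum_congr fun l => by push_cast [Nat.add_sub_cancel]; ring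
    have h4y : 4 * y * D y = ∑' l : ℕ,
        4 * ((-1 : ℝ) ^ l * (Nat.centralBinom l : ℝ) * (l : ℝ)) * y ^ l := by
      have h0 : D y = ∑' l : ℕ, (-1 : ℝ) ^ l * (Nat.centralBinom l : ℝ) * ((l : ℝ) * y ^ (l - 1)) := rfl
      rw [h0, ← tsum_mul_left]
      refine tsum_congr fun l => ?_
      cases l with
      | zero => simp
      | succ m =>
        have hm : (m + 1 : ℕ) - 1 = m := rfl
        rw [hm]
        push_cast
        ring
    have h2f : 2 * f y = ∑' l : ℕ, 2 * ((-1 : ℝ) ^ l * (Nat.centralBinom l : ℝ)) * y ^ l := by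
      have h0 : f y = ∑' l : ℕ, (-1 : ℝ) ^ l * (Nat.centralBinom l : ℝ) * y ^ l := rfl
      rw [h0, ← tsum_mul_left]
      exact tsum_congr fun l => by ring
    have expand : (1 + 4 * y) * D y + 2 * f y = D y + 4 * y * D y + 2 * f y := by ring
    rw [expand, h4y, h2f, hDshift, ← Summable.tsum_add hA hB, ← Summable.tsum_add (hA.add hB) hC]
    have hzero : ∀ l : ℕ,
        (-1 : ℝ) ^ (l + 1) * (Nat.centralBinom (l + 1) : ℝ) * (((l : ℝ) + 1) * y ^ l)
          + 4 * ((-1 : ℝ) ^ l * (Nat.centralBinom l : ℝ) * (l : ℝ)) * y ^ l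
          + 2 * ((-1 : ℝ) ^ l * (Nat.centralBinom l : ℝ)) * y ^ l = 0 := by
      intro l
      linear_combination y ^ l * stmt8_rec l
    rw [tsum_congr hzero]
    exact tsum_zero
  -- g = sqrt(1+4y) * f y has zero derivative on T
  have hpos : ∀ y ∈ T, 0 < 1 + 4 * y := by
    intro y hy
    have := hy.1
    simp only [hTdef, Set.mem_Ioo] at hy
    nlinarith [hy.1]
  set g : ℝ → ℝ := fun y => Real.sqrt (1 + 4 * y) * f y with hgdef
  have hderivg : ∀ y ∈ T, HasDerivAt g 0 y := by
    intro y hy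
    have hp := hpos y hy
    have hsne : Real.sqrt (1 + 4 * y) ≠ 0 := (Real.sqrt_pos.2 hp).ne'
    have hinner : HasDerivAt (fun z : ℝ => 1 + 4 * z) 4 y := by
      simpa using ((hasDerivAt_id y).const_mul 4).const_add 1
    have hsqrt : HasDerivAt (fun z : ℝ => Real.sqrt (1 + 4 * z))
        (1 / (2 * Real.sqrt (1 + 4 * y)) * 4) y :=
      (Real.hasDerivAt_sqrt hp.ne').comp y hinner
    have hmul := hsqrt.mul (hderivf y hy)
    have hval : 1 / (2 * Real.sqrt (1 + 4 * y)) * 4 * f y + Real.sqrt (1 + 4 * y) * D y = 0 := by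
      have hss : Real.sqrt (1 + 4 * y) * Real.sqrt (1 + 4 * y) = 1 + 4 * y :=
        Real.mul_self_sqrt hp.le
      have hO := hODE y hy
      have hmulout : (1 / (2 * Real.sqrt (1 + 4 * y)) * 4 * f y
          + Real.sqrt (1 + 4 * y) * D y) * Real.sqrt (1 + 4 * y)
          = 2 * f y + (1 + 4 * y) * D y := by
        have hinv : Real.sqrt (1 + 4 * y) * (Real.sqrt (1 + 4 * y))⁻¹ = 1 := mul_inv_cancel₀ hsne
        linear_combination (D y) * hss + 2 * f y * hinv
      have : (1 / (2 * Real.sqrt (1 + 4 * y)) * 4 * f y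
          + Real.sqrt (1 + 4 * y) * D y) * Real.sqrt (1 + 4 * y) = 0 := by
        rw [hmulout]; linarith
      exact (mul_eq_zero.1 this).resolve_right hsne
    have hgd : HasDerivAt g (1 / (2 * Real.sqrt (1 + 4 * y)) * 4 * f y
        + Real.sqrt (1 + 4 * y) * D y) y := hmul
    rw [hval] at hgd
    exact hgd
  -- g is constant on [0, x]
  have hsub : Set.Icc (0:ℝ) x ⊆ T := by
    intro y hy
    exact ⟨by linarith [hy.1], by linarith [hy.2]⟩
  have hconst : g x = g 0 := by
    have hcont : ContinuousOn g (Set.Icc 0 x) := fun y hy =>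
      (hderivg y (hsub hy)).continuousAt.continuousWithinAt
    have hder : ∀ y ∈ Set.Ico (0:ℝ) x, HasDerivWithinAt g 0 (Set.Ici y) y := fun y hy =>
      (hderivg y (hsub ⟨hy.1, hy.2.le⟩)).hasDerivWithinAt
    exact constant_of_has_deriv_right_zero hcont hder x ⟨hx0, le_refl x⟩
  have hf0 : f 0 = 1 := by
    have h0 : f 0 = ∑' l : ℕ, (-1 : ℝ) ^ l * (Nat.centralBinom l : ℝ) * (0:ℝ) ^ l := rfl
    rw [h0, tsum_eq_single 0 (fun l hl => by simp [zero_pow hl])]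
    simp [Nat.centralBinom_zero]
  have hg0 : g 0 = 1 := by
    rw [hgdef]
    simp only [mul_zero, add_zero]
    rw [Real.sqrt_one, hf0, one_mul]
  have hxp : 0 < 1 + 4 * x := by linarith
  have hsxne : Real.sqrt (1 + 4 * x) ≠ 0 := (Real.sqrt_pos.2 hxp).ne'
  have hfx : f x = 1 / Real.sqrt (1 + 4 * x) := by
    have h1 : Real.sqrt (1 + 4 * x) * f x = 1 := by
      rw [show Real.sqrt (1 + 4 * x) * f x = g x from rfl, hconst, hg0]
    rw [eq_div_iff hsxne]
    linear_combination h1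
  have hsx : Summable (fun l : ℕ => (-1 : ℝ) ^ l * (Nat.centralBinom l : ℝ) * x ^ l) :=
    hsum x ⟨by linarith, hxb⟩
  have := hsx.hasSum
  rwa [show ∑' l : ℕ, (-1 : ℝ) ^ l * (Nat.centralBinom l : ℝ) * x ^ l = f x from rfl, hfx] at this

lemma stmt8_poly_id (k : ℕ) (y : ℝ) :
    2 * (∑ j ∈ Finset.range (k + 1), (-1 : ℝ) ^ j * (Nat.centralBinom j : ℝ) * y ^ j)
      + (1 + 4 * y) * (∑ j ∈ Finset.range (k + 1),
          (-1 : ℝ) ^ j * (Nat.centralBinom j : ℝ) * ((j : ℝ) * y ^ (j - 1)))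
    = (4 * (k : ℝ) + 2) * (-1) ^ k * (Nat.centralBinom k : ℝ) * y ^ k := by
  induction k with
  | zero => norm_num [Nat.centralBinom_zero]
  | succ k ih =>
    have hr : ((k : ℝ) + 1) * (Nat.centralBinom (k + 1) : ℝ)
        = 2 * (2 * (k : ℝ) + 1) * (Nat.centralBinom k : ℝ) := by
      exact_mod_cast Nat.succ_mul_centralBinom_succ k
    simp only [Finset.sum_range_succ] at ih ⊢
    rw [Nat.add_sub_cancel]
    simp only [Nat.cast_add, Nat.cast_one]
    linear_combination ih + ((-1 : ℝ) ^ (k + 1) * y ^ k) * hr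

lemma stmt8_Q0 (k : ℕ) :
    (∑ j ∈ Finset.range (k + 1), (-1 : ℝ) ^ j * (Nat.centralBinom j : ℝ) * (0:ℝ) ^ j) = 1 := by
  rw [Finset.sum_eq_single 0]
  · simp [Nat.centralBinom_zero]
  · intro j _ hj
    simp [zero_pow hj]
  · intro h
    exact absurd (Finset.mem_range.2 (Nat.succ_pos k)) h

lemma stmt8_ftc (k : ℕ) {x : ℝ} (hx0 : 0 ≤ x) (hx : x < 1/4) :
    ∫ y in (0:ℝ)..x, ((4 * (k : ℝ) + 2) * (-1) ^ k * (Nat.centralBinom k : ℝ))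
        * (y ^ k / Real.sqrt (1 + 4 * y))
      = Real.sqrt (1 + 4 * x)
          * (∑ j ∈ Finset.range (k + 1), (-1 : ℝ) ^ j * (Nat.centralBinom j : ℝ) * x ^ j) - 1 := by
  have huIcc : Set.uIcc (0:ℝ) x = Set.Icc 0 x := Set.uIcc_of_le hx0
  set A : ℝ → ℝ := fun y => Real.sqrt (1 + 4 * y)
      * (∑ j ∈ Finset.range (k + 1), (-1 : ℝ) ^ j * (Nat.centralBinom j : ℝ) * y ^ j) with hAdef
  have hderiv : ∀ y ∈ Set.uIcc (0:ℝ) x, HasDerivAt A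
      (((4 * (k : ℝ) + 2) * (-1) ^ k * (Nat.centralBinom k : ℝ))
        * (y ^ k / Real.sqrt (1 + 4 * y))) y := by
    intro y hy
    rw [huIcc] at hy
    have hp : 0 < 1 + 4 * y := by nlinarith [hy.1]
    have hsne : Real.sqrt (1 + 4 * y) ≠ 0 := (Real.sqrt_pos.2 hp).ne'
    have hinner : HasDerivAt (fun z : ℝ => 1 + 4 * z) 4 y := by
      simpa using ((hasDerivAt_id y).const_mul 4).const_add 1
    have hsqrt : HasDerivAt (fun z : ℝ => Real.sqrt (1 + 4 * z))
        (1 / (2 * Real.sqrt (1 + 4 * y)) * 4) y :=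
      (Real.hasDerivAt_sqrt hp.ne').comp y hinner
    have hQ : HasDerivAt (fun z : ℝ => ∑ j ∈ Finset.range (k + 1),
        (-1 : ℝ) ^ j * (Nat.centralBinom j : ℝ) * z ^ j)
        (∑ j ∈ Finset.range (k + 1),
          (-1 : ℝ) ^ j * (Nat.centralBinom j : ℝ) * ((j : ℝ) * y ^ (j - 1))) y := by
      refine HasDerivAt.fun_sum (fun j _ => ?_)
      exact (hasDerivAt_pow j y).const_mul _
    have hmul := hsqrt.mul hQ
    have hss : Real.sqrt (1 + 4 * y) * Real.sqrt (1 + 4 * y) = 1 + 4 * y :=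
      Real.mul_self_sqrt hp.le
    have hval : 1 / (2 * Real.sqrt (1 + 4 * y)) * 4
          * (∑ j ∈ Finset.range (k + 1), (-1 : ℝ) ^ j * (Nat.centralBinom j : ℝ) * y ^ j)
        + Real.sqrt (1 + 4 * y) * (∑ j ∈ Finset.range (k + 1),
            (-1 : ℝ) ^ j * (Nat.centralBinom j : ℝ) * ((j : ℝ) * y ^ (j - 1)))
        = ((4 * (k : ℝ) + 2) * (-1) ^ k * (Nat.centralBinom k : ℝ))
            * (y ^ k / Real.sqrt (1 + 4 * y)) := by
      apply mul_right_cancel₀ hsne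
      rw [mul_assoc ((4 * (k : ℝ) + 2) * (-1) ^ k * (Nat.centralBinom k : ℝ))
        (y ^ k / Real.sqrt (1 + 4 * y)) (Real.sqrt (1 + 4 * y)),
        div_mul_cancel₀ (y ^ k) hsne]
      have h1 : (1 / (2 * Real.sqrt (1 + 4 * y)) * 4
            * (∑ j ∈ Finset.range (k + 1), (-1 : ℝ) ^ j * (Nat.centralBinom j : ℝ) * y ^ j)
          + Real.sqrt (1 + 4 * y) * (∑ j ∈ Finset.range (k + 1),
              (-1 : ℝ) ^ j * (Nat.centralBinom j : ℝ) * ((j : ℝ) * y ^ (j - 1))))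
            * Real.sqrt (1 + 4 * y)
          = 2 * (∑ j ∈ Finset.range (k + 1), (-1 : ℝ) ^ j * (Nat.centralBinom j : ℝ) * y ^ j)
            + (Real.sqrt (1 + 4 * y) * Real.sqrt (1 + 4 * y))
              * (∑ j ∈ Finset.range (k + 1),
                  (-1 : ℝ) ^ j * (Nat.centralBinom j : ℝ) * ((j : ℝ) * y ^ (j - 1))) := by
        have hinv : Real.sqrt (1 + 4 * y) * (Real.sqrt (1 + 4 * y))⁻¹ = 1 := mul_inv_cancel₀ hsne
        linear_combination (2 * (∑ j ∈ Finset.range (k + 1),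
          (-1 : ℝ) ^ j * (Nat.centralBinom j : ℝ) * y ^ j)) * hinv
      rw [h1, hss, stmt8_poly_id k y]
    rw [hval] at hmul
    exact hmul
  have hint : IntervalIntegrable (fun y => ((4 * (k : ℝ) + 2) * (-1) ^ k * (Nat.centralBinom k : ℝ))
      * (y ^ k / Real.sqrt (1 + 4 * y))) MeasureTheory.volume 0 x := by
    apply ContinuousOn.intervalIntegrable
    apply ContinuousOn.mul continuousOn_const
    apply ContinuousOn.div (continuousOn_pow k) (Real.continuous_sqrt.comp (by fun_prop)).continuousOn
    intro y hy
    rw [huIcc] at hy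
    have hp : 0 < 1 + 4 * y := by nlinarith [hy.1]
    exact (Real.sqrt_pos.2 hp).ne'
  rw [intervalIntegral.integral_eq_sub_of_hasDerivAt hderiv hint]
  rw [hAdef]
  simp only [mul_zero, add_zero, Real.sqrt_one]
  rw [stmt8_Q0 k, mul_one]

lemma stmt8_hasSum_integral (k : ℕ) {x : ℝ} (hx0 : 0 < x) (hx : x < 1/4) :
    HasSum (fun l : ℕ => (-1 : ℝ) ^ l * (Nat.centralBinom l : ℝ) * x ^ (k + l + 1)
        / ((k : ℝ) + (l : ℝ) + 1))
      (∫ y in (0:ℝ)..x, y ^ k / Real.sqrt (1 + 4 * y)) := by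
  have hgeom : Summable (fun l : ℕ => x ^ k * ((4 : ℝ) * x) ^ l) :=
    (summable_geometric_of_lt_one (by positivity) (by linarith)).mul_left _
  have key : HasSum
      (fun l : ℕ => ∫ y in (0:ℝ)..x, (-1 : ℝ) ^ l * (Nat.centralBinom l : ℝ) * y ^ (k + l))
      (∫ y in (0:ℝ)..x, y ^ k / Real.sqrt (1 + 4 * y)) := by
    apply intervalIntegral.hasSum_integral_of_dominated_convergence
      (bound := fun l _ => (Nat.centralBinom l : ℝ) * x ^ (k + l))
    · intro l
      exact (Continuous.aestronglyMeasurable (by continuity))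
    · intro l
      filter_upwards with y hy
      rw [Set.uIoc_of_le hx0.le] at hy
      have hy0 : 0 ≤ y := hy.1.le
      have h1 : ‖(-1 : ℝ) ^ l * (Nat.centralBinom l : ℝ) * y ^ (k + l)‖
          = (Nat.centralBinom l : ℝ) * y ^ (k + l) := by
        simp [abs_mul, abs_pow, abs_of_nonneg hy0, abs_of_nonneg, Nat.cast_nonneg]
      rw [h1]
      exact mul_le_mul_of_nonneg_left (pow_le_pow_left₀ hy0 hy.2 _) (Nat.cast_nonneg _)
    · filter_upwards with y _
      refine Summable.of_nonneg_of_le (fun l => by positivity) (fun l => ?_) hgeom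
      rw [pow_add, mul_pow]
      calc (Nat.centralBinom l : ℝ) * (x ^ k * x ^ l)
          = x ^ k * ((Nat.centralBinom l : ℝ) * x ^ l) := by ring
        _ ≤ x ^ k * ((4 : ℝ) ^ l * x ^ l) := by
            apply mul_le_mul_of_nonneg_left _ (by positivity)
            exact mul_le_mul_of_nonneg_right (stmt8_cb_le l) (by positivity)
        _ = x ^ k * (4 ^ l * x ^ l) := by ring
    · exact intervalIntegrable_const
    · filter_upwards with y hy
      rw [Set.uIoc_of_le hx0.le] at hy
      have h := (stmt8_hasSum_central hy.1.le (lt_of_le_of_lt hy.2 hx)).mul_left (y ^ k)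
      have heq : (fun l : ℕ => y ^ k * ((-1 : ℝ) ^ l * (Nat.centralBinom l : ℝ) * y ^ l))
          = fun l : ℕ => (-1 : ℝ) ^ l * (Nat.centralBinom l : ℝ) * y ^ (k + l) := by
        funext l
        rw [pow_add]
        ring
      rw [heq] at h
      rw [show y ^ k * (1 / Real.sqrt (1 + 4 * y)) = y ^ k / Real.sqrt (1 + 4 * y) by ring] at h
      exact h
  have heq : (fun l : ℕ => ∫ y in (0:ℝ)..x, (-1 : ℝ) ^ l * (Nat.centralBinom l : ℝ) * y ^ (k + l))
      = fun l : ℕ => (-1 : ℝ) ^ l * (Nat.centralBinom l : ℝ) * x ^ (k + l + 1)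
        / ((k : ℝ) + (l : ℝ) + 1) := by
    funext l
    rw [intervalIntegral.integral_const_mul, integral_pow]
    rw [zero_pow (Nat.succ_ne_zero _)]
    push_cast
    ring
  rwa [heq] at key

/-- Closed form of the functions `ζ_k` in the local Airy coordinate, where
`(2m+1)!! = (2m+1)!/(2^m·m!)` and `(2m-1)!! = (2m)!/(2^m·m!)`. -/
theorem stmt_8 (t : ℝ) (ht : 0 < t) (k : ℕ) (ζ : ℝ)
    (hζ : 0 < ζ ^ 2) (h4t : ζ ^ 2 < 4 * t) :
    Summable (fun l : ℕ =>
      ((-1 : ℝ) ^ (k + l + 1) *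
          ((Nat.factorial (2 * k + 1) : ℝ) / (2 ^ k * (Nat.factorial k : ℝ))) *
          ((Nat.factorial (2 * l + 1) : ℝ) / (2 ^ l * (Nat.factorial l : ℝ))) /
          (2 ^ (3 * k + 3 * l + 3) * ((k : ℝ) + (l : ℝ) + 1) * (Nat.factorial k : ℝ) *
            (Nat.factorial l : ℝ) * t ^ (k + l + 1))) *
        ζ ^ (2 * l + 1) / (2 * (l : ℝ) + 1)) ∧
    ((Nat.factorial (2 * k) : ℝ) / (2 ^ k * (Nat.factorial k : ℝ))) / 2 ^ k *
      (1 / ζ ^ (2 * k + 1) -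
        ∑' l : ℕ,
          ((-1 : ℝ) ^ (k + l + 1) *
              ((Nat.factorial (2 * k + 1) : ℝ) / (2 ^ k * (Nat.factorial k : ℝ))) *
              ((Nat.factorial (2 * l + 1) : ℝ) / (2 ^ l * (Nat.factorial l : ℝ))) /
              (2 ^ (3 * k + 3 * l + 3) * ((k : ℝ) + (l : ℝ) + 1) * (Nat.factorial k : ℝ) *
                (Nat.factorial l : ℝ) * t ^ (k + l + 1))) *
            ζ ^ (2 * l + 1) / (2 * (l : ℝ) + 1)) =
    ((Nat.factorial (2 * k) : ℝ) / (2 ^ k * (Nat.factorial k : ℝ))) / 2 ^ k *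
      (Real.sqrt (1 + ζ ^ 2 / (4 * t)) / ζ ^ (2 * k + 1)) *
      ∑ j ∈ Finset.range (k + 1),
        (-1 : ℝ) ^ j * (Nat.choose (2 * j) j : ℝ) * ζ ^ (2 * j) / (2 ^ (4 * j) * t ^ j) := by
  have hζne : ζ ≠ 0 := by
    intro h
    rw [h] at hζ
    simp at hζ
  set x : ℝ := ζ ^ 2 / (16 * t) with hxdef
  have hx0 : 0 < x := by positivity
  have hx : x < 1/4 := by
    rw [hxdef, div_lt_iff₀ (by positivity)]
    linarith
  have hx16 : x = ζ ^ 2 / (2 ^ 4 * t) := by norm_num [hxdef]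
  have hζpne : ζ ^ (2 * k + 1) ≠ 0 := pow_ne_zero _ hζne
  have hBkne : (Nat.centralBinom k : ℝ) ≠ 0 := Nat.cast_ne_zero.2 k.centralBinom_ne_zero
  have hI := stmt8_hasSum_integral k hx0 hx
  set I : ℝ := ∫ y in (0:ℝ)..x, y ^ k / Real.sqrt (1 + 4 * y) with hIdef
  set Cst : ℝ := (-1 : ℝ) ^ (k + 1) * 2 * (2 * (k : ℝ) + 1) * (Nat.centralBinom k : ℝ)
      / ζ ^ (2 * k + 1) with hCstdef
  -- factorial identities
  have hfac : ∀ m : ℕ, ((2 * m + 1).factorial : ℝ)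
      = (2 * (m : ℝ) + 1) * (Nat.centralBinom m : ℝ) * (m.factorial : ℝ) * (m.factorial : ℝ) := by
    intro m
    have h1 : (2 * m).choose m * m.factorial * m.factorial = (2 * m).factorial := by
      have h2 := Nat.choose_mul_factorial_mul_factorial (show m ≤ 2 * m by omega)
      have h3 : 2 * m - m = m := by omega
      rwa [h3] at h2
    have h4 : (2 * m + 1).factorial = (2 * m + 1) * (2 * m).factorial := Nat.factorial_succ _
    rw [h4, ← h1, Nat.centralBinom_eq_two_mul_choose]
    push_cast
    ring
  -- rewrite the series term
  have hteq : (fun l : ℕ =>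
      ((-1 : ℝ) ^ (k + l + 1) *
          ((Nat.factorial (2 * k + 1) : ℝ) / (2 ^ k * (Nat.factorial k : ℝ))) *
          ((Nat.factorial (2 * l + 1) : ℝ) / (2 ^ l * (Nat.factorial l : ℝ))) /
          (2 ^ (3 * k + 3 * l + 3) * ((k : ℝ) + (l : ℝ) + 1) * (Nat.factorial k : ℝ) *
            (Nat.factorial l : ℝ) * t ^ (k + l + 1))) *
        ζ ^ (2 * l + 1) / (2 * (l : ℝ) + 1))
      = fun l : ℕ => Cst * ((-1 : ℝ) ^ l * (Nat.centralBinom l : ℝ) * x ^ (k + l + 1)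
        / ((k : ℝ) + (l : ℝ) + 1)) := by
    funext l
    have hxp : x ^ (k + l + 1) = ζ ^ (2 * (k + l + 1)) / (2 ^ (4 * (k + l + 1)) * t ^ (k + l + 1)) := by
      rw [hx16, div_pow, mul_pow, ← pow_mul, ← pow_mul]
    have hkl1 : ((k : ℝ) + (l : ℝ) + 1) ≠ 0 := by positivity
    have h2l1 : (2 * (l : ℝ) + 1) ≠ 0 := by positivity
    have hkfne : (Nat.factorial k : ℝ) ≠ 0 := Nat.cast_ne_zero.2 k.factorial_ne_zero
    have hlfne : (Nat.factorial l : ℝ) ≠ 0 := Nat.cast_ne_zero.2 l.factorial_ne_zero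
    rw [hfac k, hfac l, hxp, hCstdef]
    field_simp
    ring
  have hT := (hteq ▸ hI.mul_left Cst :)
  refine ⟨hT.summable, ?_⟩
  rw [hT.tsum_eq]
  -- closed form of the integral
  have hCne : ((4 * (k : ℝ) + 2) * (-1) ^ k * (Nat.centralBinom k : ℝ)) ≠ 0 := by
    exact mul_ne_zero (mul_ne_zero (by positivity) (pow_ne_zero _ (by norm_num))) hBkne
  have hCI2 : ((4 * (k : ℝ) + 2) * (-1) ^ k * (Nat.centralBinom k : ℝ)) * I
      = Real.sqrt (1 + 4 * x)
          * (∑ j ∈ Finset.range (k + 1), (-1 : ℝ) ^ j * (Nat.centralBinom j : ℝ) * x ^ j) - 1 := by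
    rw [hIdef, ← intervalIntegral.integral_const_mul]
    exact stmt8_ftc k hx0.le hx
  have h4x : 1 + ζ ^ 2 / (4 * t) = 1 + 4 * x := by
    rw [hxdef]
    field_simp
    ring
  have hQ : (∑ j ∈ Finset.range (k + 1),
        (-1 : ℝ) ^ j * (Nat.choose (2 * j) j : ℝ) * ζ ^ (2 * j) / (2 ^ (4 * j) * t ^ j))
      = ∑ j ∈ Finset.range (k + 1), (-1 : ℝ) ^ j * (Nat.centralBinom j : ℝ) * x ^ j := by
    refine Finset.sum_congr rfl (fun j _ => ?_)
    rw [Nat.centralBinom_eq_two_mul_choose, hx16, div_pow, mul_pow, ← pow_mul, ← pow_mul]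
    ring
  rw [h4x, hQ]
  set Q : ℝ := ∑ j ∈ Finset.range (k + 1), (-1 : ℝ) ^ j * (Nat.centralBinom j : ℝ) * x ^ j with hQdef
  -- final algebra
  have hIv : I = (Real.sqrt (1 + 4 * x) * Q - 1)
      / ((4 * (k : ℝ) + 2) * (-1) ^ k * (Nat.centralBinom k : ℝ)) := by
    rw [eq_div_iff hCne]
    linear_combination hCI2
  rw [hCstdef, hIv]
  have hpow : (-1 : ℝ) ^ (k + 1) = -(-1 : ℝ) ^ k := by rw [pow_succ]; ring
  rw [hpow]
  set m : ℝ := (-1 : ℝ) ^ k with hmdef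
  have hmne : m ≠ 0 := pow_ne_zero _ (by norm_num)
  field_simp
  ring
end

section
/- Let t > 0 and let ζ₁, ζ₂ be real numbers with ζ₁² < 4t, ζ₂² < 4t, and ζ₁² ≠ ζ₂². Write (2m+1)!! = (2m+1)!/(2^m·m!). Then ( (ζ₁² + ζ₂² + ζ₁²ζ₂²/(2t))/√((1 + ζ₁²/(4t))·(1 + ζ₂²/(4t))) - (ζ₁² + ζ₂²) ) / (ζ₁² - ζ₂²)² = ∑_{l=1}^∞ ((-1)^l/(2^{3l}·l·t^l)) · ∑_{m=0}^{l-1} ((2m+1)!!/m!)·((2(l-1-m)+1)!!/((l-1-m)!))·ζ₁^{2m}·ζ₂^{2(l-1-m)}, the series on the right converging. -/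
open Finset

noncomputable def gam (m : ℕ) : ℝ := (Nat.centralBinom m : ℝ) / 2 ^ m

lemma gam_pos (m : ℕ) : 0 < gam m :=
  div_pos (by exact_mod_cast Nat.centralBinom_pos m) (by positivity)

lemma gam_zero : gam 0 = 1 := by simp [gam, Nat.centralBinom_zero]

lemma gam_rec (m : ℕ) : ((m : ℝ) + 1) * gam (m + 1) = (2 * m + 1) * gam m := by
  have h := Nat.succ_mul_centralBinom_succ m
  have h' : ((m + 1) * Nat.centralBinom (m + 1) : ℝ) = (2 * (2 * m + 1) * Nat.centralBinom m : ℝ) := by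
    exact_mod_cast congrArg (Nat.cast : ℕ → ℝ) h
  unfold gam
  push_cast at h'
  linear_combination (1/(2:ℝ)^(m+1)) * h'

lemma gam_le (m : ℕ) : gam m ≤ 2 ^ m := by
  induction m with
  | zero => simp [gam_zero]
  | succ n ih =>
    have hrec := gam_rec n
    have hn : (0:ℝ) < (n:ℝ) + 1 := by positivity
    have : gam (n+1) = (2*n+1)/(n+1) * gam n := by
      field_simp
      linarith [hrec]
    rw [this]
    have h1 : (2*(n:ℝ)+1)/((n:ℝ)+1) ≤ 2 := by
      rw [div_le_iff₀ hn]; ring_nf; linarith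
    calc (2*(n:ℝ)+1)/((n:ℝ)+1) * gam n ≤ 2 * 2^n := by
          apply mul_le_mul h1 ih (gam_pos n).le (by norm_num)
      _ = 2 ^ (n+1) := by ring

lemma hasSum_gam {y : ℝ} (hy : 2 * |y| < 1) :
    HasSum (fun m => gam m * y ^ m) (1 / Real.sqrt (1 - 2 * y)) := by
  set c : ℝ := (2 * |y| + 1) / 4 with hc
  have hy0 : 0 ≤ |y| := abs_nonneg y
  have hcpos : 0 < c := by positivity
  have hyc : |y| < c := by rw [hc]; linarith
  have hc2 : 2 * c < 1 := by rw [hc]; linarith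
  set I : Set ℝ := Set.Ioo (-c) c with hI
  have hIopen : IsOpen I := isOpen_Ioo
  have hIconn : IsPreconnected I := (convex_Ioo _ _).isPreconnected
  have hyI : y ∈ I := by
    constructor
    · have := neg_abs_le y; linarith
    · have := le_abs_self y; linarith
  have h0I : (0:ℝ) ∈ I := by constructor <;> simp [hcpos] <;> linarith
  set u : ℕ → ℝ := fun m => (m:ℝ) * 2^m * c^(m-1) with hu_def
  have hu : Summable u := by
    rw [← summable_nat_add_iff 1]
    have h1 : Summable (fun k : ℕ => (k:ℝ)^1 * (2*c)^k) :=
      summable_pow_mul_geometric_of_norm_lt_one 1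
        (by rw [Real.norm_eq_abs, abs_of_pos (by positivity)]; exact hc2)
    have h2 : Summable (fun k : ℕ => (2*c)^k) :=
      summable_geometric_of_lt_one (by positivity) hc2
    have := (h1.mul_left 2).add (h2.mul_left 2)
    refine this.congr fun k => ?_
    show 2 * ((k:ℝ)^1 * (2*c)^k) + 2 * (2*c)^k = u (k+1)
    simp only [hu_def, Nat.add_sub_cancel]
    push_cast
    rw [mul_pow]
    ring
  set g : ℕ → ℝ → ℝ := fun m z => gam m * z ^ m with hg_def
  set g' : ℕ → ℝ → ℝ := fun m z => gam m * ((m:ℝ) * z ^ (m-1)) with hg'_def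
  have hg : ∀ m (z : ℝ), HasDerivAt (g m) (g' m z) z := fun m z =>
    (hasDerivAt_pow m z).const_mul _
  have hbound : ∀ m (z : ℝ), z ∈ I → ‖g' m z‖ ≤ u m := by
    intro m z hz
    have hzc : |z| ≤ c := by
      rw [abs_le]; exact ⟨hz.1.le, hz.2.le⟩
    show ‖gam m * ((m:ℝ) * z ^ (m-1))‖ ≤ (m:ℝ) * 2^m * c^(m-1)
    rw [Real.norm_eq_abs, abs_mul, abs_mul, abs_pow, abs_of_pos (gam_pos m),
      Nat.abs_cast]
    calc gam m * ((m:ℝ) * |z| ^ (m-1)) ≤ 2^m * ((m:ℝ) * c^(m-1)) := by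
          apply mul_le_mul (gam_le m) ?_ (by positivity) (by positivity)
          exact mul_le_mul_of_nonneg_left (pow_le_pow_left₀ (abs_nonneg z) hzc _)
            (Nat.cast_nonneg m)
      _ = (m:ℝ) * 2^m * c^(m-1) := by ring
  have hg0 : Summable (fun m => g m 0) := by
    apply summable_of_ne_finset_zero (s := {0})
    intro m hm
    simp only [mem_singleton] at hm
    simp [hg_def, zero_pow hm]
  set F : ℝ → ℝ := fun z => ∑' m, g m z with hF_def
  have hF : ∀ z ∈ I, HasDerivAt F (∑' m, g' m z) z := fun z hz =>
    hasDerivAt_tsum_of_isPreconnected hu hIopen hIconn (fun m z _ => hg m z)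
      hbound h0I hg0 hz
  have hSum : ∀ z ∈ I, Summable (fun m => g m z) := fun z hz =>
    summable_of_summable_hasDerivAt_of_isPreconnected hu hIopen hIconn
      (fun m z _ => hg m z) hbound h0I hg0 hz
  have hD : ∀ z ∈ I, Summable (fun m => g' m z) := fun z hz =>
    Summable.of_norm_bounded hu (fun m => hbound m z hz)
  -- the ODE : (1 - 2z) * D z = F z on I
  have hODE : ∀ z ∈ I, (1 - 2*z) * (∑' m, g' m z) = F z := by
    intro z hz
    have hDz := hD z hz
    have hshift : Summable (fun m => g' (m+1) z) :=
      (summable_nat_add_iff (f := fun m => g' m z) 1).2 hDz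
    have h1 : (∑' m, g' m z) = ∑' m, g' (m+1) z := by
      rw [Summable.tsum_eq_zero_add hDz]
      simp [hg'_def]
    have h2 : 2*z*(∑' m, g' m z) = ∑' m, 2*z*(g' m z) := by
      rw [tsum_mul_left]
    have h3 : Summable (fun m => 2*z*(g' m z)) := hDz.mul_left _
    have : (1 - 2*z) * (∑' m, g' m z) = (∑' m, g' (m+1) z) - ∑' m, 2*z*(g' m z) := by
      rw [← h1, ← h2]; ring
    rw [this, ← Summable.tsum_sub hshift h3]
    apply tsum_congr
    intro m
    show g' (m+1) z - 2*z*(g' m z) = gam m * z ^ m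
    have hrec := gam_rec m
    cases m with
    | zero =>
      norm_num at hrec
      simp [hg'_def, hrec]
    | succ n =>
      simp only [hg'_def, Nat.add_sub_cancel]
      have hzp : z * z ^ n = z ^ (n+1) := by rw [pow_succ]; ring
      have hrec2 := gam_rec (n+1)
      push_cast at hrec2 ⊢
      linear_combination (z^(n+1)) * hrec2 + (-2*((n:ℝ)+1)*gam (n+1)) * hzp
  -- q = F^2 * (1-2z) has zero derivative on I
  set q : ℝ → ℝ := fun z => (F z)^2 * (1 - 2*z) with hq_def
  have hq : ∀ z ∈ I, HasDerivAt q 0 z := by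
    intro z hz
    have hFz := hF z hz
    have hlin : HasDerivAt (fun w : ℝ => 1 - 2*w) (-2) z := by
      simpa using ((hasDerivAt_id z).const_mul (2:ℝ)).const_sub 1
    have := ((hFz.pow 2).mul hlin)
    refine this.congr_deriv ?_
    have hODEz := hODE z hz
    norm_num
    linear_combination (2 * F z) * hODEz
  -- q is constant on I
  have hconst : ∀ z ∈ I, q z = q 0 := by
    intro z hz
    have hsub : ∀ a b : ℝ, a ∈ I → b ∈ I → Set.Icc a b ⊆ I := by
      intro a b ha hb
      intro x hx
      exact ⟨lt_of_lt_of_le ha.1 hx.1, lt_of_le_of_lt hx.2 hb.2⟩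
    rcases le_or_gt 0 z with h0 | h0
    · have hss := hsub 0 z h0I hz
      have := constant_of_has_deriv_right_zero (f := q) (a := 0) (b := z)
        (fun x hx => ((hq x (hss hx)).differentiableAt).continuousAt.continuousWithinAt)
        (fun x hx => (hq x (hss (Set.mem_Icc.2 ⟨hx.1, hx.2.le⟩))).hasDerivWithinAt)
      exact this z (Set.mem_Icc.2 ⟨h0, le_refl z⟩)
    · have hss := hsub z 0 hz h0I
      have := constant_of_has_deriv_right_zero (f := q) (a := z) (b := 0)
        (fun x hx => ((hq x (hss hx)).differentiableAt).continuousAt.continuousWithinAt)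
        (fun x hx => (hq x (hss (Set.mem_Icc.2 ⟨hx.1, hx.2.le⟩))).hasDerivWithinAt)
      exact (this 0 (Set.mem_Icc.2 ⟨h0.le, le_refl 0⟩)).symm
  have hF0 : F 0 = 1 := by
    show (∑' m, g m 0) = 1
    rw [tsum_eq_single 0 (fun m hm => by simp [hg_def, zero_pow hm])]
    simp [hg_def, gam_zero]
  have hq0 : q 0 = 1 := by simp [hq_def, hF0]
  have hq1 : ∀ z ∈ I, (F z)^2 * (1 - 2*z) = 1 := by
    intro z hz
    have := hconst z hz
    rw [hq0] at this
    exact this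
  have hFne : ∀ z ∈ I, F z ≠ 0 := by
    intro z hz hzero
    have := hq1 z hz
    rw [hzero] at this
    norm_num at this
  have hFpos : 0 < F y := by
    by_contra hle
    push_neg at hle
    have hylt : F y < 0 := lt_of_le_of_ne hle (hFne y hyI)
    have huIcc : Set.uIcc y 0 ⊆ I := Set.ordConnected_Ioo.uIcc_subset hyI h0I
    have hcont : ContinuousOn F (Set.uIcc y 0) := fun x hx =>
      ((hF x (huIcc hx)).differentiableAt).continuousAt.continuousWithinAt
    have h0mem : (0:ℝ) ∈ Set.uIcc (F y) (F 0) := by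
      rw [hF0, Set.mem_uIcc]
      left; exact ⟨hylt.le, zero_le_one⟩
    obtain ⟨z, hzmem, hzval⟩ := intermediate_value_uIcc hcont h0mem
    exact hFne z (huIcc hzmem) hzval
  have h12y : 0 < 1 - 2*y := by
    have h1 : 2*y ≤ 2*|y| := by have := le_abs_self y; linarith
    linarith
  have hval : F y = 1 / Real.sqrt (1 - 2*y) := by
    have hsq : (F y)^2 = 1/(1 - 2*y) := by
      have := hq1 y hyI
      field_simp
      linarith [this]
    have hsp : 0 < Real.sqrt (1 - 2*y) := Real.sqrt_pos.2 h12y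
    have hx : 0 < Real.sqrt (1 - 2*y) * F y := mul_pos hsp hFpos
    have hx2 : (Real.sqrt (1 - 2*y) * F y)^2 = 1 := by
      rw [mul_pow, Real.sq_sqrt h12y.le, hsq]
      field_simp
    have hfac : (Real.sqrt (1 - 2*y) * F y - 1) * (Real.sqrt (1 - 2*y) * F y + 1) = 0 := by
      linear_combination hx2
    have hx1 : Real.sqrt (1 - 2*y) * F y = 1 := by
      rcases mul_eq_zero.1 hfac with h | h
      · linarith
      · linarith
    rw [eq_div_iff (ne_of_gt hsp)]
    linarith [hx1]
  have := (hSum y hyI).hasSum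
  rw [show (∑' m, g m y) = F y from rfl, hval] at this
  exact this

noncomputable def alf (m : ℕ) : ℝ := (2 * (m:ℝ) + 1) * gam m

lemma alf_zero : alf 0 = 1 := by simp [alf, gam_zero]

lemma alf_eq (m : ℕ) : alf m = ((m:ℝ) + 1) * gam (m+1) := by
  rw [alf, ← gam_rec]

lemma alf_pred {m : ℕ} (hm : 1 ≤ m) : alf (m - 1) = (m:ℝ) * gam m := by
  obtain ⟨k, rfl⟩ : ∃ k, m = k + 1 := ⟨m - 1, by omega⟩
  rw [Nat.add_sub_cancel, alf_eq]
  push_cast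
  ring

lemma core (m n : ℕ) :
    (m:ℝ) * gam m * alf (n+1) - 2 * alf m * alf n + alf (m+1) * ((n:ℝ) * gam n)
    = ((m:ℝ) + (n:ℝ) + 1) * (gam m * gam (n+1) + gam (m+1) * gam n - 4 * (gam m * gam n)) := by
  have hm := gam_rec m
  have hn := gam_rec n
  have hm0 : ((m:ℝ) + 1) ≠ 0 := by positivity
  have hn0 : ((n:ℝ) + 1) ≠ 0 := by positivity
  have hm' : gam (m+1) = (2*(m:ℝ)+1) * gam m / ((m:ℝ)+1) := by
    field_simp; linarith [hm]
  have hn' : gam (n+1) = (2*(n:ℝ)+1) * gam n / ((n:ℝ)+1) := by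
    field_simp; linarith [hn]
  simp only [alf]
  rw [hm', hn']
  push_cast
  field_simp
  ring

lemma sum_shift (f : ℕ → ℝ) (n d : ℕ) :
    ∑ i ∈ range (n + d), (if d ≤ i then f (i - d) else 0) = ∑ k ∈ range n, f k := by
  induction d with
  | zero => simp
  | succ e ih =>
    rw [show n + (e+1) = (n+e)+1 by omega, Finset.sum_range_succ']
    have h0 : (if e+1 ≤ 0 then f (0 - (e+1)) else 0) = 0 := by
      rw [if_neg (by omega)]
    rw [h0, add_zero]
    rw [show (∑ k ∈ range (n+e), if e+1 ≤ k+1 then f (k+1 - (e+1)) else 0)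
        = ∑ k ∈ range (n+e), (if e ≤ k then f (k - e) else 0) from
      Finset.sum_congr rfl (fun k _ => by
        by_cases h : e ≤ k
        · rw [if_pos (by omega), if_pos h, show k+1-(e+1) = k-e by omega]
        · rw [if_neg (by omega), if_neg h])]
    exact ih

lemma sum_pad (f : ℕ → ℝ) (n N : ℕ) (h : n ≤ N) :
    ∑ i ∈ range N, (if i < n then f i else 0) = ∑ i ∈ range n, f i := by
  rw [← Finset.sum_subset (Finset.range_subset_range.2 h)
    (fun x _ hx => if_neg (by simp [Finset.mem_range] at hx; omega))]
  exact Finset.sum_congr rfl (fun i hi => if_pos (Finset.mem_range.1 hi))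

lemma sum_repr (f : ℕ → ℝ) (n d N : ℕ) (h : n + d ≤ N) :
    ∑ i ∈ range N, (if d ≤ i ∧ i < n + d then f (i - d) else 0) = ∑ k ∈ range n, f k := by
  rw [← sum_shift f n d, ← sum_pad (fun i => if d ≤ i then f (i - d) else 0) (n+d) N h]
  apply Finset.sum_congr rfl
  intro i _
  by_cases h1 : i < n + d <;> by_cases h2 : d ≤ i <;> simp [h1, h2]

lemma coeff_identity (p : ℕ) (a b : ℝ) :
    (a - b)^2 * (∑ k ∈ range (p+1), alf k * alf (p - k) * a^k * b^(p-k))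
    = ((p:ℝ)+1) * ((a+b) * (∑ k ∈ range (p+2), gam k * gam (p+1-k) * a^k * b^(p+1-k))
        - 4*(a*b) * (∑ k ∈ range (p+1), gam k * gam (p-k) * a^k * b^(p-k))) := by
  set C : ℝ := ∑ k ∈ range (p+1), alf k * alf (p - k) * a^k * b^(p-k) with hC
  set E1 : ℝ := ∑ k ∈ range (p+2), gam k * gam (p+1-k) * a^k * b^(p+1-k) with hE1
  set E0 : ℝ := ∑ k ∈ range (p+1), gam k * gam (p-k) * a^k * b^(p-k) with hE0
  set f1 : ℕ → ℝ := fun i => if 2 ≤ i ∧ i < p+3 then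
      alf (i-2) * alf (p-(i-2)) * a^((i-2)+2) * b^(p-(i-2)) else 0 with hf1
  set f2 : ℕ → ℝ := fun i => if 1 ≤ i ∧ i < p+2 then
      alf (i-1) * alf (p-(i-1)) * a^((i-1)+1) * b^((p-(i-1))+1) else 0 with hf2
  set f3 : ℕ → ℝ := fun i => if 0 ≤ i ∧ i < p+1 then
      alf i * alf (p-i) * a^i * b^((p-i)+2) else 0 with hf3
  set f4 : ℕ → ℝ := fun i => if 1 ≤ i ∧ i < p+3 then
      gam (i-1) * gam (p+1-(i-1)) * a^((i-1)+1) * b^(p+1-(i-1)) else 0 with hf4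
  set f5 : ℕ → ℝ := fun i => if 0 ≤ i ∧ i < p+2 then
      gam i * gam (p+1-i) * a^i * b^((p+1-i)+1) else 0 with hf5
  set f6 : ℕ → ℝ := fun i => if 1 ≤ i ∧ i < p+2 then
      gam (i-1) * gam (p-(i-1)) * a^((i-1)+1) * b^((p-(i-1))+1) else 0 with hf6
  have e1 : a^2 * C = ∑ i ∈ range (p+3), f1 i := by
    calc a^2 * C = ∑ k ∈ range (p+1), alf k * alf (p-k) * a^(k+2) * b^(p-k) := by
          rw [hC, Finset.mul_sum]
          exact Finset.sum_congr rfl (fun k _ => by ring)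
      _ = ∑ i ∈ range (p+3), f1 i :=
          (sum_repr (fun k => alf k * alf (p-k) * a^(k+2) * b^(p-k)) (p+1) 2 (p+3) (by omega)).symm
  have e2 : a*b*C = ∑ i ∈ range (p+3), f2 i := by
    calc a*b*C = ∑ k ∈ range (p+1), alf k * alf (p-k) * a^(k+1) * b^((p-k)+1) := by
          rw [hC, Finset.mul_sum]
          exact Finset.sum_congr rfl (fun k _ => by ring)
      _ = ∑ i ∈ range (p+3), f2 i :=
          (sum_repr (fun k => alf k * alf (p-k) * a^(k+1) * b^((p-k)+1)) (p+1) 1 (p+3) (by omega)).symm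
  have e3 : b^2 * C = ∑ i ∈ range (p+3), f3 i := by
    calc b^2 * C = ∑ k ∈ range (p+1), alf k * alf (p-k) * a^k * b^((p-k)+2) := by
          rw [hC, Finset.mul_sum]
          exact Finset.sum_congr rfl (fun k _ => by ring)
      _ = ∑ i ∈ range (p+3), f3 i :=
          (sum_repr (fun k => alf k * alf (p-k) * a^k * b^((p-k)+2)) (p+1) 0 (p+3) (by omega)).symm
  have e4 : a * E1 = ∑ i ∈ range (p+3), f4 i := by
    calc a * E1 = ∑ k ∈ range (p+2), gam k * gam (p+1-k) * a^(k+1) * b^(p+1-k) := by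
          rw [hE1, Finset.mul_sum]
          exact Finset.sum_congr rfl (fun k _ => by ring)
      _ = ∑ i ∈ range (p+3), f4 i :=
          (sum_repr (fun k => gam k * gam (p+1-k) * a^(k+1) * b^(p+1-k)) (p+2) 1 (p+3) (by omega)).symm
  have e5 : b * E1 = ∑ i ∈ range (p+3), f5 i := by
    calc b * E1 = ∑ k ∈ range (p+2), gam k * gam (p+1-k) * a^k * b^((p+1-k)+1) := by
          rw [hE1, Finset.mul_sum]
          exact Finset.sum_congr rfl (fun k _ => by ring)
      _ = ∑ i ∈ range (p+3), f5 i :=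
          (sum_repr (fun k => gam k * gam (p+1-k) * a^k * b^((p+1-k)+1)) (p+2) 0 (p+3) (by omega)).symm
  have e6 : a*b*E0 = ∑ i ∈ range (p+3), f6 i := by
    calc a*b*E0 = ∑ k ∈ range (p+1), gam k * gam (p-k) * a^(k+1) * b^((p-k)+1) := by
          rw [hE0, Finset.mul_sum]
          exact Finset.sum_congr rfl (fun k _ => by ring)
      _ = ∑ i ∈ range (p+3), f6 i :=
          (sum_repr (fun k => gam k * gam (p-k) * a^(k+1) * b^((p-k)+1)) (p+1) 1 (p+3) (by omega)).symm
  have main : ∀ i ∈ range (p+3),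
      f1 i - 2 * f2 i + f3 i = ((p:ℝ)+1) * (f4 i + f5 i - 4 * f6 i) := by
    intro i hi
    rw [Finset.mem_range] at hi
    simp only [hf1, hf2, hf3, hf4, hf5, hf6]
    by_cases hi0 : i = 0
    · subst hi0
      rw [if_neg (by omega), if_neg (by omega), if_pos (by omega),
        if_neg (by omega), if_pos (by omega), if_neg (by omega)]
      simp only [Nat.sub_zero, pow_zero]
      rw [show alf 0 = 1 from alf_zero, alf_eq p, gam_zero]
      push_cast
      ring
    · by_cases hip : i = p+2
      · subst hip
        rw [if_pos (by omega), if_neg (by omega), if_neg (by omega),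
          if_pos (by omega), if_neg (by omega), if_neg (by omega)]
        rw [show p+2-2 = p from by omega, show p-p = 0 from by omega,
          show p+2-1 = p+1 from by omega, show p+1-(p+1) = 0 from by omega,
          show (p+1)+1 = p+2 from by omega]
        simp only [pow_zero]
        rw [show alf 0 = 1 from alf_zero, alf_eq p, gam_zero]
        push_cast
        ring
      · -- main case 1 ≤ i ≤ p+1
        obtain ⟨m, rfl⟩ : ∃ m, i = m + 1 := ⟨i - 1, by omega⟩
        obtain ⟨n, rfl⟩ : ∃ n, p = m + n := ⟨p - m, by omega⟩
        have hT2cond : (1 ≤ m+1 ∧ m+1 < m+n+2) := ⟨by omega, by omega⟩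
        rw [if_pos hT2cond, if_pos (show 1 ≤ m+1 ∧ m+1 < m+n+3 from ⟨by omega, by omega⟩),
          if_pos (show 0 ≤ m+1 ∧ m+1 < m+n+2 from ⟨by omega, by omega⟩),
          if_pos hT2cond]
        rw [show m+1-1 = m from by omega, show m+n-m = n from by omega,
          show m+n+1-m = n+1 from by omega, show m+n+1-(m+1) = n from by omega]
        have hT1 : (if 2 ≤ m+1 ∧ m+1 < m+n+3 then
            alf (m+1-2) * alf (m+n-(m+1-2)) * a^((m+1-2)+2) * b^(m+n-(m+1-2)) else 0)
            = ((m:ℝ) * gam m) * alf (n+1) * a^(m+1) * b^(n+1) := by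
          by_cases hm1 : 1 ≤ m
          · rw [if_pos ⟨by omega, by omega⟩, show m+1-2 = m-1 from by omega,
              show m+n-(m-1) = n+1 from by omega, show (m-1)+2 = m+1 from by omega,
              alf_pred hm1]
          · have hm0 : m = 0 := by omega
            subst hm0
            rw [if_neg (by omega)]
            norm_num
        have hT3 : (if 0 ≤ m+1 ∧ m+1 < m+n+1 then
            alf (m+1) * alf (m+n-(m+1)) * a^(m+1) * b^((m+n-(m+1))+2) else 0)
            = alf (m+1) * ((n:ℝ) * gam n) * a^(m+1) * b^(n+1) := by
          by_cases hn1 : 1 ≤ n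
          · rw [if_pos ⟨by omega, by omega⟩, show m+n-(m+1) = n-1 from by omega]
            rw [show alf (n-1) = (n:ℝ) * gam n from alf_pred hn1,
              show (n-1)+2 = n+1 from by omega]
          · have hn0 : n = 0 := by omega
            subst hn0
            rw [if_neg (by omega)]
            norm_num
        rw [hT1, hT3]
        push_cast
        linear_combination (a^(m+1) * b^(n+1)) * core m n
  calc (a-b)^2 * C = a^2*C - 2*(a*b*C) + b^2*C := by ring
    _ = (∑ i ∈ range (p+3), f1 i) - 2*(∑ i ∈ range (p+3), f2 i) + ∑ i ∈ range (p+3), f3 i := by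
        rw [e1, e2, e3]
    _ = ∑ i ∈ range (p+3), (f1 i - 2 * f2 i + f3 i) := by
        rw [Finset.mul_sum, ← Finset.sum_sub_distrib, ← Finset.sum_add_distrib]
    _ = ∑ i ∈ range (p+3), ((p:ℝ)+1) * (f4 i + f5 i - 4 * f6 i) := Finset.sum_congr rfl main
    _ = ((p:ℝ)+1) * ∑ i ∈ range (p+3), (f4 i + f5 i - 4 * f6 i) := by
        rw [Finset.mul_sum]
    _ = ((p:ℝ)+1) * ((∑ i ∈ range (p+3), f4 i) + (∑ i ∈ range (p+3), f5 i)
          - 4 * ∑ i ∈ range (p+3), f6 i) := by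
        rw [Finset.sum_sub_distrib, Finset.sum_add_distrib, Finset.mul_sum]
    _ = ((p:ℝ)+1) * ((a*E1 + b*E1) - 4*(a*b*E0)) := by rw [← e4, ← e5, ← e6]
    _ = ((p:ℝ)+1) * ((a+b)*E1 - 4*(a*b)*E0) := by ring

lemma dfact_eq (m : ℕ) :
    (((Nat.factorial (2 * m + 1) : ℝ) / (2 ^ m * (Nat.factorial m : ℝ))) /
      (Nat.factorial m : ℝ)) = alf m := by
  have h := Nat.choose_mul_factorial_mul_factorial (show m ≤ 2*m by omega)
  rw [show 2*m - m = m by omega] at h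
  have h3 : ((2*m).factorial : ℝ) = (Nat.centralBinom m : ℝ) * m.factorial * m.factorial := by
    rw [Nat.centralBinom_eq_two_mul_choose]
    exact_mod_cast h.symm
  have h2 : ((2*m+1).factorial : ℝ) = (2*(m:ℝ)+1) * ((2*m).factorial : ℝ) := by
    rw [Nat.factorial_succ]
    push_cast
    ring
  have hfac : (0:ℝ) < (Nat.factorial m : ℝ) := by exact_mod_cast Nat.factorial_pos m
  rw [alf, gam, h2, h3]
  field_simp

/-- Expansion of the regularized Bergman kernel of the spectral curve `y² = 1/16 - t/(4x)`
in the local Airy coordinates, where `(2m+1)!! = (2m+1)!/(2^m·m!)`; the outer series over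
`l ≥ 1` is indexed here by `l = p + 1`, `p : ℕ`. -/
theorem stmt_10 (t : ℝ) (ht : 0 < t) (ζ₁ ζ₂ : ℝ)
    (h1 : ζ₁ ^ 2 < 4 * t) (h2 : ζ₂ ^ 2 < 4 * t) (hne : ζ₁ ^ 2 ≠ ζ₂ ^ 2) :
    HasSum (fun p : ℕ =>
      ((-1 : ℝ) ^ (p + 1) / (2 ^ (3 * (p + 1)) * ((p : ℝ) + 1) * t ^ (p + 1))) *
        ∑ m ∈ Finset.range (p + 1),
          (((Nat.factorial (2 * m + 1) : ℝ) / (2 ^ m * (Nat.factorial m : ℝ))) /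
            (Nat.factorial m : ℝ)) *
          (((Nat.factorial (2 * (p - m) + 1) : ℝ) /
              (2 ^ (p - m) * (Nat.factorial (p - m) : ℝ))) /
            (Nat.factorial (p - m) : ℝ)) *
          ζ₁ ^ (2 * m) * ζ₂ ^ (2 * (p - m)))
      (((ζ₁ ^ 2 + ζ₂ ^ 2 + ζ₁ ^ 2 * ζ₂ ^ 2 / (2 * t)) /
          Real.sqrt ((1 + ζ₁ ^ 2 / (4 * t)) * (1 + ζ₂ ^ 2 / (4 * t))) -
          (ζ₁ ^ 2 + ζ₂ ^ 2)) / (ζ₁ ^ 2 - ζ₂ ^ 2) ^ 2) := by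
  have ht' : t ≠ 0 := ne_of_gt ht
  set a : ℝ := ζ₁ ^ 2 with ha
  set b : ℝ := ζ₂ ^ 2 with hb
  have ha0 : 0 ≤ a := sq_nonneg _
  have hb0 : 0 ≤ b := sq_nonneg _
  set s : ℝ := -(1 / (8 * t)) with hs
  have habne : a - b ≠ 0 := sub_ne_zero.2 hne
  -- the two binomial series
  have hkey : ∀ x : ℝ, 0 ≤ x → x < 4 * t →
      HasSum (fun m => gam m * (x * s) ^ m) (1 / Real.sqrt (1 + x / (4 * t))) := by
    intro x hx0 hx4
    have habs : 2 * |x * s| < 1 := by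
      rw [hs, abs_mul, abs_of_nonneg hx0, abs_neg, abs_of_pos (by positivity : (0:ℝ) < 1/(8*t))]
      have hq : x / (4*t) < 1 := (div_lt_one (by positivity)).2 hx4
      calc 2 * (x * (1/(8*t))) = x / (4*t) := by field_simp; ring
        _ < 1 := hq
    have := hasSum_gam habs
    rw [show 1 - 2*(x*s) = 1 + x/(4*t) by rw [hs]; field_simp; ring] at this
    exact this
  have hsa := hkey a ha0 h1
  have hsb := hkey b hb0 h2
  have hnorm : ∀ x : ℝ, 0 ≤ x → x < 4 * t →
      Summable (fun m => ‖gam m * (x * s) ^ m‖) := by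
    intro x hx0 hx4
    have habs : 2 * |(|x * s|)| < 1 := by
      rw [abs_abs, hs, abs_mul, abs_of_nonneg hx0, abs_neg,
        abs_of_pos (by positivity : (0:ℝ) < 1/(8*t))]
      have : x / (4*t) < 1 := (div_lt_one (by positivity)).2 hx4
      calc 2 * (x * (1/(8*t))) = x / (4*t) := by field_simp; ring
        _ < 1 := this
    have hsum := (hasSum_gam habs).summable
    refine hsum.congr fun m => ?_
    simp [Real.norm_eq_abs, abs_mul, abs_pow, abs_of_pos (gam_pos m)]
  have hna := hnorm a ha0 h1
  have hnb := hnorm b hb0 h2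
  set P : ℝ := (1 / Real.sqrt (1 + a / (4 * t))) * (1 / Real.sqrt (1 + b / (4 * t))) with hP
  set E : ℕ → ℝ := fun p => ∑ k ∈ Finset.range (p+1),
      (gam k * (a * s) ^ k) * (gam (p - k) * (b * s) ^ (p - k)) with hE
  have hECauchy : HasSum E P := by
    have := hasSum_sum_range_mul_of_summable_norm hna hnb
    rwa [hsa.tsum_eq, hsb.tsum_eq] at this
  have hE0 : E 0 = 1 := by
    simp [hE, gam_zero]
  have hEshift : HasSum (fun p => E (p+1)) (P - 1) := by
    refine (hasSum_nat_add_iff (f := E) 1).2 ?_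
    rw [Finset.range_one, Finset.sum_singleton, hE0]
    rw [sub_add_cancel]
    exact hECauchy
  have hcomb : HasSum
      (fun p => ((a+b) * E (p+1) - (4*(a*b)*s) * E p) / (a-b)^2)
      (((a+b) * (P - 1) - (4*(a*b)*s) * P) / (a-b)^2) :=
    ((hEshift.mul_left (a+b)).sub (hECauchy.mul_left (4*(a*b)*s))).div_const _
  -- identify terms
  have hterm : ∀ p : ℕ,
      ((-1 : ℝ) ^ (p + 1) / (2 ^ (3 * (p + 1)) * ((p : ℝ) + 1) * t ^ (p + 1))) *
        ∑ m ∈ Finset.range (p + 1),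
          (((Nat.factorial (2 * m + 1) : ℝ) / (2 ^ m * (Nat.factorial m : ℝ))) /
            (Nat.factorial m : ℝ)) *
          (((Nat.factorial (2 * (p - m) + 1) : ℝ) /
              (2 ^ (p - m) * (Nat.factorial (p - m) : ℝ))) /
            (Nat.factorial (p - m) : ℝ)) *
          ζ₁ ^ (2 * m) * ζ₂ ^ (2 * (p - m))
      = ((a+b) * E (p+1) - (4*(a*b)*s) * E p) / (a-b)^2 := by
    intro p
    have hCsum : (∑ m ∈ Finset.range (p + 1),
        (((Nat.factorial (2 * m + 1) : ℝ) / (2 ^ m * (Nat.factorial m : ℝ))) /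
          (Nat.factorial m : ℝ)) *
        (((Nat.factorial (2 * (p - m) + 1) : ℝ) /
            (2 ^ (p - m) * (Nat.factorial (p - m) : ℝ))) /
          (Nat.factorial (p - m) : ℝ)) *
        ζ₁ ^ (2 * m) * ζ₂ ^ (2 * (p - m)))
        = ∑ m ∈ Finset.range (p+1), alf m * alf (p - m) * a^m * b^(p-m) := by
      refine Finset.sum_congr rfl fun m _ => ?_
      rw [dfact_eq, dfact_eq, ha, hb, pow_mul, pow_mul]
    have hEq : ∀ q : ℕ, E q = s^q * ∑ k ∈ Finset.range (q+1), gam k * gam (q-k) * a^k * b^(q-k) := by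
      intro q
      rw [hE, Finset.mul_sum]
      refine Finset.sum_congr rfl fun k hk => ?_
      rw [Finset.mem_range] at hk
      rw [mul_pow, mul_pow, show s^q = s^k * s^(q-k) by
        rw [← pow_add, show k + (q-k) = q by omega]]
      ring
    have hpre : ((-1 : ℝ) ^ (p + 1) / (2 ^ (3 * (p + 1)) * ((p : ℝ) + 1) * t ^ (p + 1)))
        = s^(p+1) / ((p:ℝ)+1) := by
      have hp1 : ((p:ℝ)+1) ≠ 0 := by positivity
      rw [hs, show (2:ℝ) ^ (3 * (p+1)) = 8 ^ (p+1) by rw [pow_mul]; norm_num,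
        show -(1/(8*t)) = -1 / (8*t) from by ring, div_pow, mul_pow]
      field_simp
    rw [hCsum, hpre, hEq (p+1), hEq p]
    have hid := coeff_identity p a b
    have hp1 : ((p:ℝ)+1) ≠ 0 := by positivity
    rw [div_mul_eq_mul_div, div_eq_div_iff (by positivity) (pow_ne_zero 2 habne)]
    linear_combination (s^(p+1)) * hid
  -- identify the sum value
  have hval : (((a+b) * (P - 1) - (4*(a*b)*s) * P) / (a-b)^2)
      = ((a + b + a * b / (2 * t)) /
          Real.sqrt ((1 + a / (4 * t)) * (1 + b / (4 * t))) - (a + b)) / (a-b)^2 := by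
    have hu : (0:ℝ) ≤ 1 + a / (4*t) := by positivity
    have hv : (0:ℝ) ≤ 1 + b / (4*t) := by positivity
    have hsu : Real.sqrt (1 + a / (4*t)) ≠ 0 := by
      refine ne_of_gt (Real.sqrt_pos.2 ?_)
      positivity
    have hsv : Real.sqrt (1 + b / (4*t)) ≠ 0 := by
      refine ne_of_gt (Real.sqrt_pos.2 ?_)
      positivity
    rw [Real.sqrt_mul hu]
    congr 1
    rw [hP, hs]
    field_simp
    ring
  have hfinal := hcomb
  rw [hval] at hfinal
  exact hfinal.congr_fun hterm
end

section
/- Let t and x be real numbers with x > 4t > 0. Write (2m-1)!! = (2m)!/(2^m·m!) for m ≥ 0, and interpret (2n-5)·(2n-1)!!/(24·(n-1)!) with the convention coming from the formula (so for n = 1 it equals -1/8 and for n = 2 it equals -3/24). Then -1/(8·x²·√(1 - 4t/x)) + 2t²/(x⁴·(1 - 4t/x)^{5/2}) = ∑_{n=1}^∞ ((2n-5)·(2n-1)!!/(24·(n-1)!))·(2t)^{n-1}·x^{-(n+1)}, the series converging. -/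
open Real Set Filter Finset

noncomputable def bb (m : ℕ) : ℝ := (Nat.centralBinom m : ℝ) / 4 ^ m

lemma bb_nonneg (m : ℕ) : 0 ≤ bb m := by
  unfold bb; positivity

lemma bb_zero : bb 0 = 1 := by simp [bb, Nat.centralBinom]

lemma bb_rec (m : ℕ) : 2 * ((m : ℝ) + 1) * bb (m + 1) = (2 * m + 1) * bb m := by
  have h := Nat.succ_mul_centralBinom_succ m
  have h' : ((m : ℝ) + 1) * (Nat.centralBinom (m + 1) : ℝ)
      = 2 * (2 * m + 1) * (Nat.centralBinom m : ℝ) := by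
    exact_mod_cast congrArg (fun n : ℕ => (n : ℝ)) h
  unfold bb
  have h4 : (4 : ℝ) ^ (m + 1) = 4 * 4 ^ m := by ring
  rw [h4]
  linear_combination (1 / 2 * ((4:ℝ) ^ m)⁻¹) * h'

lemma bb_le_one (m : ℕ) : bb m ≤ 1 := by
  induction m with
  | zero => simp [bb_zero]
  | succ n ih =>
    have h := bb_rec n
    have hn : 0 ≤ bb n := bb_nonneg n
    nlinarith

noncomputable def FF (y : ℝ) : ℝ := ∑' m, bb m * y ^ m
noncomputable def FF1 (y : ℝ) : ℝ := ∑' m, bb m * ((m : ℝ) * y ^ (m - 1))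
noncomputable def FF2 (y : ℝ) : ℝ :=
  ∑' m, bb m * (m : ℝ) * (((m - 1 : ℕ) : ℝ) * y ^ (m - 1 - 1))

lemma norm_term1_le {r y : ℝ} (hy : |y| ≤ r) (m : ℕ) :
    ‖bb m * ((m : ℝ) * y ^ (m - 1))‖ ≤ (m : ℝ) * r ^ (m - 1) := by
  have h0r : 0 ≤ r := le_trans (abs_nonneg y) hy
  calc ‖bb m * ((m : ℝ) * y ^ (m - 1))‖
      = bb m * ((m : ℝ) * |y| ^ (m - 1)) := by
        rw [Real.norm_eq_abs, abs_mul, abs_mul, abs_pow,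
          abs_of_nonneg (bb_nonneg m), abs_of_nonneg (Nat.cast_nonneg m)]
    _ ≤ 1 * ((m : ℝ) * r ^ (m - 1)) := by
        have hp : |y| ^ (m-1) ≤ r ^ (m-1) := pow_le_pow_left₀ (abs_nonneg y) hy _
        have hb := bb_le_one m
        have h2 : (0:ℝ) ≤ (m:ℝ) * |y| ^ (m-1) := by positivity
        nlinarith [bb_nonneg m, Nat.cast_nonneg (α := ℝ) m, pow_nonneg (abs_nonneg y) (m-1)]
    _ = (m : ℝ) * r ^ (m - 1) := one_mul _

lemma norm_term2_le {r y : ℝ} (hy : |y| ≤ r) (m : ℕ) :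
    ‖bb m * (m : ℝ) * (((m - 1 : ℕ) : ℝ) * y ^ (m - 1 - 1))‖
      ≤ (m : ℝ) ^ 2 * r ^ (m - 1 - 1) := by
  have h0r : 0 ≤ r := le_trans (abs_nonneg y) hy
  have hm1 : ((m - 1 : ℕ) : ℝ) ≤ (m : ℝ) := by
    exact_mod_cast Nat.sub_le m 1
  calc ‖bb m * (m : ℝ) * (((m - 1 : ℕ) : ℝ) * y ^ (m - 1 - 1))‖
      = bb m * (m : ℝ) * (((m - 1 : ℕ) : ℝ) * |y| ^ (m - 1 - 1)) := by
        rw [Real.norm_eq_abs, abs_mul, abs_mul, abs_mul, abs_pow,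
          abs_of_nonneg (bb_nonneg m), abs_of_nonneg (Nat.cast_nonneg m),
          abs_of_nonneg (Nat.cast_nonneg (m - 1))]
    _ ≤ 1 * (m : ℝ) * ((m : ℝ) * r ^ (m - 1 - 1)) := by
        have hp : |y| ^ (m-1-1) ≤ r ^ (m-1-1) := pow_le_pow_left₀ (abs_nonneg y) hy _
        have hb := bb_le_one m
        have hbn := bb_nonneg m
        have hmn : (0:ℝ) ≤ (m:ℝ) := Nat.cast_nonneg m
        have hm1n : (0:ℝ) ≤ ((m-1:ℕ):ℝ) := Nat.cast_nonneg _
        have hyn : (0:ℝ) ≤ |y| ^ (m-1-1) := pow_nonneg (abs_nonneg y) _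
        exact mul_le_mul (mul_le_mul hb le_rfl hmn zero_le_one)
          (mul_le_mul hm1 hp hyn hmn) (by positivity) (by positivity)
    _ = (m : ℝ) ^ 2 * r ^ (m - 1 - 1) := by ring

lemma summable_U1 {r : ℝ} (h0 : 0 ≤ r) (h1 : r < 1) :
    Summable (fun m : ℕ => (m : ℝ) * r ^ (m - 1)) := by
  rw [← summable_nat_add_iff 1]
  have h := summable_pow_mul_geometric_of_norm_lt_one (R := ℝ) 1
    (by rwa [Real.norm_eq_abs, abs_of_nonneg h0])
  have hg := summable_geometric_of_lt_one h0 h1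
  refine (h.add hg).congr fun m => ?_
  push_cast [Nat.add_sub_cancel]
  ring

lemma summable_U2 {r : ℝ} (h0 : 0 ≤ r) (h1 : r < 1) :
    Summable (fun m : ℕ => (m : ℝ) ^ 2 * r ^ (m - 1 - 1)) := by
  rw [← summable_nat_add_iff 2]
  have hnorm : ‖r‖ < 1 := by rwa [Real.norm_eq_abs, abs_of_nonneg h0]
  have h2 := summable_pow_mul_geometric_of_norm_lt_one (R := ℝ) 2 hnorm
  have h1' := summable_pow_mul_geometric_of_norm_lt_one (R := ℝ) 1 hnorm
  have hg := summable_geometric_of_lt_one h0 h1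
  refine ((h2.add (h1'.mul_left 4)).add (hg.mul_left 4)).congr fun m => ?_
  push_cast [show m + 2 - 1 - 1 = m from rfl]
  ring

lemma summable_FFt {y : ℝ} (h : |y| < 1) : Summable fun m => bb m * y ^ m := by
  refine Summable.of_norm_bounded (summable_geometric_of_lt_one (abs_nonneg y) h)
    fun m => ?_
  rw [Real.norm_eq_abs, abs_mul, abs_pow, abs_of_nonneg (bb_nonneg m)]
  calc bb m * |y| ^ m ≤ 1 * |y| ^ m := by
        have := bb_le_one m
        have : (0:ℝ) ≤ |y| ^ m := by positivity
        nlinarith [bb_le_one m]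
    _ = |y| ^ m := one_mul _

lemma hasDerivAt_FF {r : ℝ} (h0 : 0 < r) (h1 : r < 1) {y : ℝ} (hy : y ∈ Ioo (-r) r) :
    HasDerivAt FF (FF1 y) y := by
  refine hasDerivAt_tsum_of_isPreconnected (u := fun m : ℕ => (m : ℝ) * r ^ (m - 1))
    (summable_U1 h0.le h1) isOpen_Ioo isPreconnected_Ioo
    (fun m z _ => (hasDerivAt_pow m z).const_mul (bb m))
    (fun m z hz => ?_) (Set.mem_Ioo.mpr ⟨by linarith, h0⟩)
    ?_ hy
  · exact norm_term1_le (le_of_lt (abs_lt.mpr ⟨hz.1, hz.2⟩)) m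
  · refine summable_of_ne_finset_zero (s := {0}) fun m hm => ?_
    simp only [Finset.mem_singleton] at hm
    simp [zero_pow hm]

lemma hasDerivAt_FF1 {r : ℝ} (h0 : 0 < r) (h1 : r < 1) {y : ℝ} (hy : y ∈ Ioo (-r) r) :
    HasDerivAt FF1 (FF2 y) y := by
  refine hasDerivAt_tsum_of_isPreconnected
    (g' := fun (m : ℕ) (z : ℝ) => bb m * (m : ℝ) * (((m - 1 : ℕ) : ℝ) * z ^ (m - 1 - 1)))
    (u := fun m : ℕ => (m : ℝ) ^ 2 * r ^ (m - 1 - 1))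
    (summable_U2 h0.le h1) isOpen_Ioo isPreconnected_Ioo
    (fun m z _ => ?_)
    (fun m z hz => ?_) (Set.mem_Ioo.mpr ⟨by linarith, h0⟩)
    ?_ hy
  · simpa only [← mul_assoc] using (hasDerivAt_pow (m - 1) z).const_mul (bb m * (m : ℝ))
  · exact norm_term2_le (le_of_lt (abs_lt.mpr ⟨hz.1, hz.2⟩)) m
  · refine summable_of_ne_finset_zero (s := {0, 1}) fun m hm => ?_
    simp only [Finset.mem_insert, Finset.mem_singleton] at hm
    push_neg at hm
    have : m - 1 ≠ 0 := by omega
    simp [zero_pow this]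

lemma ode {r : ℝ} (h0 : 0 < r) (h1 : r < 1) {y : ℝ} (hy : y ∈ Ioo (-r) r) :
    FF y = 2 * (1 - y) * FF1 y := by
  have hyr : |y| ≤ r := le_of_lt (abs_lt.mpr ⟨hy.1, hy.2⟩)
  have hy1 : |y| < 1 := lt_of_le_of_lt hyr h1
  have hA : HasSum (fun m => bb m * y ^ m) (FF y) := (summable_FFt hy1).hasSum
  have hSB : Summable fun m => bb m * ((m : ℝ) * y ^ (m - 1)) :=
    Summable.of_norm_bounded (summable_U1 h0.le h1) (norm_term1_le hyr)
  have hB : HasSum (fun m => bb m * ((m : ℝ) * y ^ (m - 1))) (FF1 y) := hSB.hasSum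
  have hB' := (hasSum_nat_add_iff' (f := fun m => bb m * ((m : ℝ) * y ^ (m - 1))) 1).2 hB
  simp only [Finset.range_one, Finset.sum_singleton, Nat.cast_zero, zero_mul, mul_zero,
    sub_zero, Nat.add_sub_cancel, Nat.cast_add, Nat.cast_one] at hB'
  -- hB' : HasSum (fun m => bb (m+1) * ((↑m + 1) * y ^ m)) (FF1 y)
  have hC := hB'.mul_left 2
  have hD := hB.mul_left (2 * y)
  have hE := hC.sub hD
  have hfun : (fun m : ℕ => 2 * (bb (m + 1) * (((m : ℝ) + 1) * y ^ m))
      - 2 * y * (bb m * ((m : ℝ) * y ^ (m - 1)))) = fun m => bb m * y ^ m := by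
    funext m
    match m with
    | 0 =>
      have h := bb_rec 0
      simp only [Nat.cast_zero] at h ⊢
      simp [bb_zero] at h ⊢
      linarith
    | k + 1 =>
      have h := bb_rec (k + 1)
      push_cast at h ⊢
      linear_combination (y ^ (k + 1)) * h
  rw [hfun] at hE
  have := hA.unique hE
  linarith [this]

lemma FF_zero : FF 0 = 1 := by
  unfold FF
  rw [tsum_eq_single 0 (fun m hm => by simp [zero_pow hm])]
  simp [bb_zero]

lemma FF_eq {s : ℝ} (hs0 : 0 < s) (hs1 : s < 1) :
    ∀ y ∈ Icc (0 : ℝ) s, FF y = (1 - y) ^ (-(1 / 2) : ℝ) := by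
  set r : ℝ := (1 + s) / 2 with hr
  have hr0 : 0 < r := by rw [hr]; linarith
  have hr1 : r < 1 := by rw [hr]; linarith
  have hsr : s < r := by rw [hr]; linarith
  have hmem : ∀ y ∈ Icc (0 : ℝ) s, y ∈ Ioo (-r) r := fun y hy =>
    ⟨by linarith [hy.1], by linarith [hy.2]⟩
  -- Φ has zero derivative
  have hΦderiv : ∀ y ∈ Ioo (-r) r,
      HasDerivAt (fun z => FF z ^ 2 * (1 - z)) 0 y := by
    intro y hy
    have hF := hasDerivAt_FF hr0 hr1 hy
    have h : HasDerivAt (fun z => FF z ^ 2 * (1 - z))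
        (2 * FF y ^ 1 * FF1 y * (1 - y) + FF y ^ 2 * (-1)) y :=
      (hF.pow 2).mul ((hasDerivAt_id y).const_sub 1)
    have hode := ode hr0 hr1 hy
    convert h using 1
    linear_combination (FF y) * hode
  have hcont : ContinuousOn (fun z => FF z ^ 2 * (1 - z)) (Icc 0 s) := fun y hy =>
    ((hΦderiv y (hmem y hy)).continuousAt).continuousWithinAt
  have hconst := constant_of_has_deriv_right_zero hcont
    (fun y hy => (hΦderiv y (hmem y ⟨hy.1, hy.2.le⟩)).hasDerivWithinAt)
  intro y hy
  have hΦ : FF y ^ 2 * (1 - y) = 1 := by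
    have := hconst y hy
    simpa [FF_zero] using this
  have h1y : 0 < 1 - y := by linarith [hy.2]
  have hy1 : |y| < 1 := by
    rw [abs_lt]; constructor <;> linarith [hy.1, hy.2]
  have hFpos : (1 : ℝ) ≤ FF y := by
    have hA : HasSum (fun m => bb m * y ^ m) (FF y) := (summable_FFt hy1).hasSum
    have := le_hasSum hA 0 (fun m _ => by
      have := bb_nonneg m
      have : (0:ℝ) ≤ y ^ m := pow_nonneg hy.1 m
      positivity)
    simpa [bb_zero] using this
  have hGpos : 0 < (1 - y) ^ (-(1 / 2) : ℝ) := Real.rpow_pos_of_pos h1y _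
  have hg2 : ((1 - y) ^ (-(1 / 2) : ℝ)) ^ 2 = (1 - y) ^ (-1 : ℝ) := by
    rw [← Real.rpow_natCast ((1 - y) ^ (-(1 / 2) : ℝ)) 2, ← Real.rpow_mul h1y.le]
    norm_num
  have hgsq : ((1 - y) ^ (-(1 / 2) : ℝ)) ^ 2 * (1 - y) = 1 := by
    rw [hg2, Real.rpow_neg_one]
    field_simp
  have hsq : FF y ^ 2 = ((1 - y) ^ (-(1 / 2) : ℝ)) ^ 2 := by
    have h := hΦ
    have h' := hgsq
    nlinarith
  calc FF y = Real.sqrt (FF y ^ 2) := (Real.sqrt_sq (by linarith)).symm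
    _ = Real.sqrt (((1 - y) ^ (-(1 / 2) : ℝ)) ^ 2) := by rw [hsq]
    _ = (1 - y) ^ (-(1 / 2) : ℝ) := Real.sqrt_sq hGpos.le

lemma FF1_eq {s : ℝ} (hs0 : 0 < s) (hs1 : s < 1) :
    ∀ y ∈ Ioo (0 : ℝ) s, FF1 y = (1 / 2) * (1 - y) ^ (-(3 / 2) : ℝ) := by
  set r : ℝ := (1 + s) / 2 with hr
  have hr0 : 0 < r := by rw [hr]; linarith
  have hr1 : r < 1 := by rw [hr]; linarith
  have hsr : s < r := by rw [hr]; linarith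
  intro y hy
  have hy1 : 0 < 1 - y := by linarith [hy.2]
  have hd : HasDerivAt FF (FF1 y) y :=
    hasDerivAt_FF hr0 hr1 ⟨by linarith [hy.1], by linarith [hy.2]⟩
  have hEq : FF =ᶠ[nhds y] fun z => (1 - z) ^ (-(1 / 2) : ℝ) :=
    Filter.eventuallyEq_of_mem (isOpen_Ioo.mem_nhds hy)
      (fun z hz => FF_eq hs0 hs1 z ⟨hz.1.le, hz.2.le⟩)
  have hd' : HasDerivAt (fun z => (1 - z) ^ (-(1 / 2) : ℝ)) (FF1 y) y :=
    hd.congr_of_eventuallyEq hEq.symm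
  have hg : HasDerivAt (fun z => (1 - z) ^ (-(1 / 2) : ℝ))
      ((-1) * (-(1 / 2) : ℝ) * (1 - y) ^ ((-(1 / 2) : ℝ) - 1)) y :=
    ((hasDerivAt_id y).const_sub 1).rpow_const (Or.inl (ne_of_gt hy1))
  have := hd'.unique hg
  rw [this]
  norm_num

lemma FF2_eq {s : ℝ} (hs0 : 0 < s) (hs1 : s < 1) :
    ∀ y ∈ Ioo (0 : ℝ) s, FF2 y = (3 / 4) * (1 - y) ^ (-(5 / 2) : ℝ) := by
  set r : ℝ := (1 + s) / 2 with hr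
  have hr0 : 0 < r := by rw [hr]; linarith
  have hr1 : r < 1 := by rw [hr]; linarith
  have hsr : s < r := by rw [hr]; linarith
  intro y hy
  have hy1 : 0 < 1 - y := by linarith [hy.2]
  have hd : HasDerivAt FF1 (FF2 y) y :=
    hasDerivAt_FF1 hr0 hr1 ⟨by linarith [hy.1], by linarith [hy.2]⟩
  have hEq : FF1 =ᶠ[nhds y] fun z => (1 / 2) * (1 - z) ^ (-(3 / 2) : ℝ) :=
    Filter.eventuallyEq_of_mem (isOpen_Ioo.mem_nhds hy) (fun z hz => FF1_eq hs0 hs1 z hz)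
  have hd' : HasDerivAt (fun z => (1 / 2) * (1 - z) ^ (-(3 / 2) : ℝ)) (FF2 y) y :=
    hd.congr_of_eventuallyEq hEq.symm
  have hg : HasDerivAt (fun z => (1 / 2) * (1 - z) ^ (-(3 / 2) : ℝ))
      ((1 / 2) * ((-1) * (-(3 / 2) : ℝ) * (1 - y) ^ ((-(3 / 2) : ℝ) - 1))) y :=
    (((hasDerivAt_id y).const_sub 1).rpow_const (Or.inl (ne_of_gt hy1))).const_mul (1 / 2)
  have := hd'.unique hg
  rw [this]
  norm_num
  ring

/-- Taylor expansion of the genus-one one-point function `G_{1,1}(x)` of the modified GUE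
model, with coefficients `⟨p_{2n}⟩₁ = ((2n-5)(2n-1)!!/(24(n-1)!))·(2t)^{n-1}` where
`(2m-1)!! = (2m)!/(2^m·m!)`; the series over `n ≥ 1` is indexed here by `n = m + 1`. -/
theorem stmt_12 (t x : ℝ) (ht : 0 < t) (hx : 4 * t < x) :
    HasSum (fun m : ℕ =>
      (2 * (m : ℝ) - 3) * ((Nat.factorial (2 * (m + 1)) : ℝ) /
        (2 ^ (m + 1) * (Nat.factorial (m + 1) : ℝ))) / (24 * (Nat.factorial m : ℝ)) *
      (2 * t) ^ m / x ^ (m + 2))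
      (-1 / (8 * x ^ 2 * Real.sqrt (1 - 4 * t / x)) +
        2 * t ^ 2 / (x ^ 4 * (1 - 4 * t / x) ^ ((5 : ℝ) / 2))) := by
  have hx0 : 0 < x := lt_trans (by linarith) hx
  set u : ℝ := 4 * t / x with hu
  have hu0 : 0 < u := by positivity
  have hu1 : u < 1 := (div_lt_one hx0).2 hx
  have huabs : |u| < 1 := by rw [abs_of_pos hu0]; exact hu1
  set s : ℝ := (1 + u) / 2 with hs
  have hs0 : 0 < s := by rw [hs]; linarith
  have hs1 : s < 1 := by rw [hs]; linarith
  have hus : u < s := by rw [hs]; linarith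
  have hv : 0 < 1 - u := by linarith
  -- the two HasSum facts
  have hFu : FF u = (1 - u) ^ (-(1 / 2) : ℝ) := FF_eq hs0 hs1 u ⟨hu0.le, hus.le⟩
  have hF2u : FF2 u = (3 / 4) * (1 - u) ^ (-(5 / 2) : ℝ) := FF2_eq hs0 hs1 u ⟨hu0, hus⟩
  have hA : HasSum (fun m => bb m * u ^ m) ((1 - u) ^ (-(1 / 2) : ℝ)) := by
    have h := (summable_FFt huabs).hasSum
    rwa [show (∑' m, bb m * u ^ m) = FF u from rfl, hFu] at h
  have hSC : Summable (fun m : ℕ =>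
      bb m * (m : ℝ) * (((m - 1 : ℕ) : ℝ) * u ^ (m - 1 - 1))) :=
    Summable.of_norm_bounded (summable_U2 hu0.le hu1)
      (norm_term2_le (le_of_eq (abs_of_pos hu0)))
  have hC : HasSum (fun m : ℕ => bb m * (m : ℝ) * (((m - 1 : ℕ) : ℝ) * u ^ (m - 1 - 1)))
      ((3 / 4) * (1 - u) ^ (-(5 / 2) : ℝ)) := by
    have h := hSC.hasSum
    rwa [show (∑' m, bb m * (m : ℝ) * (((m - 1 : ℕ) : ℝ) * u ^ (m - 1 - 1))) = FF2 u from rfl,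
      hF2u] at h
  have hT := (hC.mul_left (u ^ 2 / (6 * x ^ 2))).sub (hA.mul_left (1 / (8 * x ^ 2)))
  -- identify the function
  have hfun : (fun m : ℕ =>
      u ^ 2 / (6 * x ^ 2) * (bb m * (m : ℝ) * (((m - 1 : ℕ) : ℝ) * u ^ (m - 1 - 1)))
        - 1 / (8 * x ^ 2) * (bb m * u ^ m))
      = fun m : ℕ =>
      (2 * (m : ℝ) - 3) * ((Nat.factorial (2 * (m + 1)) : ℝ) /
        (2 ^ (m + 1) * (Nat.factorial (m + 1) : ℝ))) / (24 * (Nat.factorial m : ℝ)) *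
      (2 * t) ^ m / x ^ (m + 2) := by
    funext m
    have h4 : ∀ j : ℕ, (4 : ℝ) ^ j = 2 ^ j * 2 ^ j := fun j => by
      rw [show (4 : ℝ) = 2 * 2 by norm_num, mul_pow]
    match m with
    | 0 =>
      simp only [bb_zero, hu]
      norm_num [Nat.factorial]
      field_simp
    | 1 =>
      have hbb1 : bb 1 = 1 / 2 := by
        have : Nat.centralBinom 1 = 2 := by decide
        simp [bb, this]
        norm_num
      simp only [hbb1, hu]
      norm_num [Nat.factorial]
      field_simp
      ring
    | k + 2 =>
      have hnat : (Nat.centralBinom (k + 2) : ℝ) * (Nat.factorial (k + 2) : ℝ)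
          * (Nat.factorial (k + 2) : ℝ) = (Nat.factorial (2 * (k + 2)) : ℝ) := by
        have h := Nat.choose_mul_factorial_mul_factorial
          (show k + 2 ≤ 2 * (k + 2) by omega)
        rw [show 2 * (k + 2) - (k + 2) = k + 2 by omega] at h
        rw [Nat.centralBinom]
        exact_mod_cast congrArg (fun n : ℕ => (n : ℝ)) h
      have hfact : ((Nat.factorial (2 * (k + 2 + 1)) : ℕ) : ℝ)
          = (2 * (k + 2) + 2) * ((2 * (k + 2) + 1) * (Nat.factorial (2 * (k + 2)) : ℝ)) := by
        rw [show 2 * (k + 2 + 1) = (2 * (k + 2) + 1) + 1 by ring, Nat.factorial_succ,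
          Nat.factorial_succ]
        push_cast
        ring
      have hfact3 : ((Nat.factorial (k + 2 + 1) : ℕ) : ℝ)
          = (k + 3) * (Nat.factorial (k + 2) : ℝ) := by
        rw [Nat.factorial_succ]; push_cast; ring
      have hfne : (Nat.factorial (k + 2) : ℝ) ≠ 0 := by
        exact_mod_cast (Nat.factorial_pos (k + 2)).ne'
      simp only [bb, hu, hfact, hfact3]
      rw [show k + 2 - 1 = k + 1 from rfl, show k + 1 - 1 = k from rfl]
      rw [← hnat]
      push_cast
      simp only [div_pow, mul_pow, h4]
      field_simp
      ring
  rw [hfun] at hT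
  -- identify the value
  have hval : u ^ 2 / (6 * x ^ 2) * ((3 / 4) * (1 - u) ^ (-(5 / 2) : ℝ))
      - 1 / (8 * x ^ 2) * ((1 - u) ^ (-(1 / 2) : ℝ))
      = -1 / (8 * x ^ 2 * Real.sqrt (1 - 4 * t / x)) +
        2 * t ^ 2 / (x ^ 4 * (1 - 4 * t / x) ^ ((5 : ℝ) / 2)) := by
    rw [← hu]
    have h1 : (1 - u) ^ (-(1 / 2) : ℝ) = (Real.sqrt (1 - u))⁻¹ := by
      rw [Real.rpow_neg hv.le, ← Real.sqrt_eq_rpow]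
    have h2 : (1 - u) ^ (-(5 / 2) : ℝ) = ((1 - u) ^ ((5 : ℝ) / 2))⁻¹ := by
      rw [show (-(5 / 2) : ℝ) = -((5 : ℝ) / 2) by norm_num, Real.rpow_neg hv.le]
    have hsqpos : 0 < Real.sqrt (1 - u) := Real.sqrt_pos.2 hv
    have hrppos : 0 < (1 - u) ^ ((5 : ℝ) / 2) := Real.rpow_pos_of_pos hv _
    rw [h1, h2, hu]
    have hux : u ^ 2 = 16 * t ^ 2 / x ^ 2 := by rw [hu]; field_simp; ring
    rw [← hu, hux]
    field_simp
    ring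
  rw [hval] at hT
  exact hT
end

section
/- Let t and v be real numbers with v > 4t > 0. Then the limit as u → v (over u > 4t, u ≠ v) of (1 - 2t/u - 2t/v)/(2·(u-v)²·√((1 - 4t/u)·(1 - 4t/v))) - 1/(2·(u-v)²) exists and equals t²/( v⁴·(1 - 4t/v)² ). -/
open Filter Real

set_option maxHeartbeats 1000000


/-- The limit computing `E_{x₀,u,v} G_{0,2}(u,v)`: as `u → v` over `u > 4t`, `u ≠ v`,
the regularized two-point function tends to `t²/(v⁴(1-4t/v)²)`. -/
theorem stmt_13 (t v : ℝ) (ht : 0 < t) (hv : 4 * t < v) :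
    Filter.Tendsto (fun u : ℝ =>
      (1 - 2 * t / u - 2 * t / v) /
        (2 * (u - v) ^ 2 * Real.sqrt ((1 - 4 * t / u) * (1 - 4 * t / v))) -
        1 / (2 * (u - v) ^ 2))
      (nhdsWithin v {u : ℝ | 4 * t < u ∧ u ≠ v})
      (nhds (t ^ 2 / (v ^ 4 * (1 - 4 * t / v) ^ 2))) := by
  have hv0 : 0 < v := by linarith
  have hav : 0 < 1 - 4 * t / v := by
    rw [sub_pos, div_lt_one hv0]; linarith
  set g : ℝ → ℝ := fun u =>
    4 * t ^ 2 / (u ^ 2 * v ^ 2) /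
      (2 * Real.sqrt ((1 - 4 * t / u) * (1 - 4 * t / v)) *
        ((1 - 2 * t / u - 2 * t / v) + Real.sqrt ((1 - 4 * t / u) * (1 - 4 * t / v)))) with hgdef
  have hsv : Real.sqrt ((1 - 4 * t / v) * (1 - 4 * t / v)) = 1 - 4 * t / v :=
    Real.sqrt_mul_self hav.le
  have hgc : ContinuousAt g v := by
    apply ContinuousAt.div
    · fun_prop (disch := positivity)
    · apply ContinuousAt.mul
      · apply ContinuousAt.mul continuousAt_const
        apply Real.continuous_sqrt.continuousAt.comp
        fun_prop (disch := positivity)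
      · apply ContinuousAt.add
        · fun_prop (disch := positivity)
        · apply Real.continuous_sqrt.continuousAt.comp
          fun_prop (disch := positivity)
    · simp only [hsv]
      have : 0 < 1 - 2 * t / v - 2 * t / v := by
        have : 2 * t / v < 1 / 2 := by rw [div_lt_div_iff₀ hv0 two_pos]; linarith
        linarith
      positivity
  have hgval : g v = t ^ 2 / (v ^ 4 * (1 - 4 * t / v) ^ 2) := by
    simp only [hgdef, hsv]
    have h4 : (1:ℝ) - 2 * t / v - 2 * t / v = 1 - 4 * t / v := by ring
    rw [h4, div_div]
    rw [div_eq_div_iff (by positivity) (by positivity)]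
    ring
  have hgt : Tendsto g (nhdsWithin v {u : ℝ | 4 * t < u ∧ u ≠ v})
      (nhds (t ^ 2 / (v ^ 4 * (1 - 4 * t / v) ^ 2))) := by
    rw [← hgval]
    exact (hgc.continuousWithinAt).tendsto
  refine Tendsto.congr' ?_ hgt
  filter_upwards [self_mem_nhdsWithin] with u hu
  obtain ⟨hu4, hune⟩ := hu
  have hu0 : 0 < u := by linarith
  have hau : 0 < 1 - 4 * t / u := by rw [sub_pos, div_lt_one hu0]; linarith
  show g u = (1 - 2 * t / u - 2 * t / v) /
        (2 * (u - v) ^ 2 * Real.sqrt ((1 - 4 * t / u) * (1 - 4 * t / v))) -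
        1 / (2 * (u - v) ^ 2)
  rw [hgdef]
  simp only
  set s := Real.sqrt ((1 - 4 * t / u) * (1 - 4 * t / v)) with hsdef
  have hs : 0 < s := Real.sqrt_pos.mpr (mul_pos hau hav)
  have hs2 : s ^ 2 = (1 - 4 * t / u) * (1 - 4 * t / v) :=
    Real.sq_sqrt (mul_pos hau hav).le
  clear_value s
  have hA : 0 < 1 - 2 * t / u - 2 * t / v := by
    have h1 : 2 * t / u < 1 / 2 := by rw [div_lt_div_iff₀ hu0 two_pos]; linarith
    have h2 : 2 * t / v < 1 / 2 := by rw [div_lt_div_iff₀ hv0 two_pos]; linarith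
    linarith
  have hAs : (1 - 2 * t / u - 2 * t / v) + s ≠ 0 := by positivity
  have huv : u - v ≠ 0 := sub_ne_zero.mpr hune
  have key : s ^ 2 * (u ^ 2 * v ^ 2) = ((u - 4*t) * (v - 4*t)) * (u * v) := by
    rw [hs2]; field_simp
  have hD : (u - 2 * t) * v - u * (2 * t) + s * (u * v) ≠ 0 := by
    have he : (u - 2 * t) * v - u * (2 * t) + s * (u * v)
        = u * v * ((1 - 2 * t / u - 2 * t / v) + s) := by field_simp
    rw [he]
    positivity
  have hD' : v * (u - t * 2) - t * u * 2 + u * v * s ≠ 0 := by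
    intro h; apply hD; linear_combination h
  field_simp
  linear_combination key
end

section
/- Let n ≥ 0 be an integer and let y₀, y_j be nonzero real numbers with y₀² ≠ y_j². Then ( 2·y_j·(y₀^{-(2n+1)} - y_j^{-(2n+1)}) + (2n+1)·(y₀² - y_j²)·y_j^{-(2n+2)} ) / (y₀² - y_j²)² + y₀^{-(2n+2)}/(y₀ + y_j)² = y₀^{-(2n+2)}·y_j^{-(2n+2)} · ∑_{k=0}^n (2n+1-2k)·y₀^{2n-2k}·y_j^{2k}. -/
lemma geom_aux (n : ℕ) (a b : ℝ) :
    (a - b) * ∑ k ∈ Finset.range (n + 1), a ^ (n - k) * b ^ k = a ^ (n + 1) - b ^ (n + 1) := by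
  induction n with
  | zero => simp
  | succ n ih =>
    have hc : ∑ k ∈ Finset.range (n + 1), a ^ (n + 1 - k) * b ^ k
        = a * ∑ k ∈ Finset.range (n + 1), a ^ (n - k) * b ^ k := by
      rw [Finset.mul_sum]
      refine Finset.sum_congr rfl fun k hk => ?_
      have hk' : k ≤ n := Nat.lt_succ_iff.mp (Finset.mem_range.mp hk)
      rw [show n + 1 - k = (n - k) + 1 by omega, pow_succ]
      ring
    rw [Finset.sum_range_succ, hc, Nat.sub_self, pow_zero, one_mul]
    linear_combination a * ih

lemma step_aux (n : ℕ) (a b : ℝ) :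
    ∑ k ∈ Finset.range (n + 2), (2 * (n : ℝ) + 3 - 2 * (k : ℝ)) * a ^ (n + 1 - k) * b ^ k
      = a * (∑ k ∈ Finset.range (n + 1),
          (2 * (n : ℝ) + 1 - 2 * (k : ℝ)) * a ^ (n - k) * b ^ k)
        + 2 * a * (∑ k ∈ Finset.range (n + 1), a ^ (n - k) * b ^ k) + b ^ (n + 1) := by
  rw [Finset.sum_range_succ, Finset.mul_sum, Finset.mul_sum, ← Finset.sum_add_distrib]
  congr 1
  · refine Finset.sum_congr rfl fun k hk => ?_
    have hk' : k ≤ n := Nat.lt_succ_iff.mp (Finset.mem_range.mp hk)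
    rw [show n + 1 - k = (n - k) + 1 by omega, pow_succ]
    ring
  · rw [Nat.sub_self, pow_zero]
    push_cast
    ring

lemma key_aux (n : ℕ) (a b : ℝ) :
    (a - b) ^ 2 * ∑ k ∈ Finset.range (n + 1),
        (2 * (n : ℝ) + 1 - 2 * (k : ℝ)) * a ^ (n - k) * b ^ k
      = (2 * (n : ℝ) + 1) * a ^ (n + 2) - (2 * (n : ℝ) + 3) * a ^ (n + 1) * b
        + a * b ^ (n + 1) + b ^ (n + 2) := by
  induction n with
  | zero => simp; ring
  | succ n ih =>
    have hcast : ∑ k ∈ Finset.range (n + 1 + 1),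
        (2 * ((n + 1 : ℕ) : ℝ) + 1 - 2 * (k : ℝ)) * a ^ (n + 1 - k) * b ^ k
        = ∑ k ∈ Finset.range (n + 2), (2 * (n : ℝ) + 3 - 2 * (k : ℝ)) * a ^ (n + 1 - k) * b ^ k := by
      refine Finset.sum_congr rfl fun k _ => ?_
      push_cast
      ring
    rw [hcast, step_aux]
    push_cast
    linear_combination a * ih + 2 * a * (a - b) * geom_aux n a b

/-- The final rational-function identity in the proof that the correlation functions of the
modified GUE model satisfy the Eynard–Orantin topological recursion. -/
theorem stmt_18 (n : ℕ) (y₀ yj : ℝ) (h0 : y₀ ≠ 0) (hj : yj ≠ 0) (hne : y₀ ^ 2 ≠ yj ^ 2) :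
    (2 * yj * (1 / y₀ ^ (2 * n + 1) - 1 / yj ^ (2 * n + 1)) +
        (2 * (n : ℝ) + 1) * (y₀ ^ 2 - yj ^ 2) / yj ^ (2 * n + 2)) / (y₀ ^ 2 - yj ^ 2) ^ 2 +
      (1 / y₀ ^ (2 * n + 2)) / (y₀ + yj) ^ 2 =
    1 / (y₀ ^ (2 * n + 2) * yj ^ (2 * n + 2)) *
      ∑ k ∈ Finset.range (n + 1),
        (2 * (n : ℝ) + 1 - 2 * (k : ℝ)) * y₀ ^ (2 * (n - k)) * yj ^ (2 * k) := by
  set a := y₀ ^ 2 with ha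
  set b := yj ^ 2 with hb
  have hsum : ∑ k ∈ Finset.range (n + 1),
      (2 * (n : ℝ) + 1 - 2 * (k : ℝ)) * y₀ ^ (2 * (n - k)) * yj ^ (2 * k)
      = ∑ k ∈ Finset.range (n + 1), (2 * (n : ℝ) + 1 - 2 * (k : ℝ)) * a ^ (n - k) * b ^ k := by
    refine Finset.sum_congr rfl fun k _ => ?_
    rw [ha, hb, ← pow_mul, ← pow_mul, mul_comm 2 (n - k), mul_comm 2 k]
  rw [hsum]
  have hab : a - b ≠ 0 := sub_ne_zero.mpr hne
  have hmul : (y₀ - yj) * (y₀ + yj) = a - b := by rw [ha, hb]; ring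
  have hsumne : y₀ + yj ≠ 0 := by
    intro h; rw [h, mul_zero] at hmul; exact hab hmul.symm
  have hS : ∑ k ∈ Finset.range (n + 1), (2 * (n : ℝ) + 1 - 2 * (k : ℝ)) * a ^ (n - k) * b ^ k
      = ((2 * (n : ℝ) + 1) * a ^ (n + 2) - (2 * (n : ℝ) + 3) * a ^ (n + 1) * b
          + a * b ^ (n + 1) + b ^ (n + 2)) / (a - b) ^ 2 := by
    rw [eq_div_iff (pow_ne_zero 2 hab), mul_comm, key_aux]
  rw [hS]
  have hy1 : y₀ ^ (2 * n + 1) = y₀ * a ^ n := by rw [ha, ← pow_mul]; ring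
  have hy2 : yj ^ (2 * n + 1) = yj * b ^ n := by rw [hb, ← pow_mul]; ring
  have hy3 : y₀ ^ (2 * n + 2) = a ^ (n + 1) := by rw [ha, ← pow_mul]; ring
  have hy4 : yj ^ (2 * n + 2) = b ^ (n + 1) := by rw [hb, ← pow_mul]; ring
  rw [hy1, hy2, hy3, hy4]
  have han : a ≠ 0 := pow_ne_zero 2 h0
  have hbn : b ≠ 0 := pow_ne_zero 2 hj
  field_simp
  rw [← hmul]
  rw [ha, hb]
  ring
end

section
/- Let t > 0 and let y₁, y₂ ∈ (-1/4, 0) with y₁ ≠ y₂. Set x_i = 4t/(1 - 16·y_i²) for i = 1, 2. Then ( (1 - 2t/x₁ - 2t/x₂)/(32·(x₁ - x₂)²·y₁·y₂) + 1/(2·(x₁ - x₂)²) ) · (128·t·y₁/(1 - 16·y₁²)²) · (128·t·y₂/(1 - 16·y₂²)²) = 1/(y₁ - y₂)². -/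
/-!
In the coordinate `y` one has `2t/x = (1 - 16y²)/2`, so `1 - 2t/x₁ - 2t/x₂ = 8(y₁² + y₂²)` and the
bracket collapses to `(y₁ + y₂)² / (4 y₁ y₂ (x₁ - x₂)²)`. Since
`x₁ - x₂ = 64 t (y₁ - y₂)(y₁ + y₂) / ((1 - 16y₁²)(1 - 16y₂²))`, the factor `(y₁ + y₂)²` and the
Jacobians `dx/dy` cancel against `(x₁ - x₂)²`, leaving `1/(y₁ - y₂)²`.
-/

namespace SpectralCurve

variable {K : Type*} [Field K]

def xOfY (t y : K) : K := 4 * t / (1 - 16 * y ^ 2)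

lemma two_mul_div_xOfY [CharZero K] {t y : K} (ht : t ≠ 0) (hy : 1 - 16 * y ^ 2 ≠ 0) :
    2 * t / xOfY t y = (1 - 16 * y ^ 2) / 2 := by
  unfold xOfY
  field_simp
  ring

lemma xOfY_sub_xOfY {t y₁ y₂ : K} (h₁ : 1 - 16 * y₁ ^ 2 ≠ 0) (h₂ : 1 - 16 * y₂ ^ 2 ≠ 0) :
    xOfY t y₁ - xOfY t y₂ =
      64 * t * (y₁ - y₂) * (y₁ + y₂) / ((1 - 16 * y₁ ^ 2) * (1 - 16 * y₂ ^ 2)) := by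
  unfold xOfY
  field_simp
  ring

theorem corrected_two_point_mul_jacobians [CharZero K] {t y₁ y₂ : K} (ht : t ≠ 0)
    (hy₁ : y₁ ≠ 0) (hy₂ : y₂ ≠ 0) (h₁ : 1 - 16 * y₁ ^ 2 ≠ 0) (h₂ : 1 - 16 * y₂ ^ 2 ≠ 0)
    (hsub : y₁ - y₂ ≠ 0) (hadd : y₁ + y₂ ≠ 0) :
    ((1 - 2 * t / xOfY t y₁ - 2 * t / xOfY t y₂) /
          (32 * (xOfY t y₁ - xOfY t y₂) ^ 2 * y₁ * y₂) +
        1 / (2 * (xOfY t y₁ - xOfY t y₂) ^ 2)) *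
      (128 * t * y₁ / (1 - 16 * y₁ ^ 2) ^ 2) * (128 * t * y₂ / (1 - 16 * y₂ ^ 2) ^ 2) =
    1 / (y₁ - y₂) ^ 2 := by
  rw [two_mul_div_xOfY ht h₁, two_mul_div_xOfY ht h₂, xOfY_sub_xOfY h₁ h₂, div_pow]
  field_simp
  ring

end SpectralCurve

/-- On the spectral curve `y² = 1/16 - t/(4x)` parametrized by `x = 4t/(1-16y²)`,
the corrected genus-zero two-point differential equals the Bergman kernel
`dy₁dy₂/(y₁-y₂)²`. -/
theorem stmt_19 (t : ℝ) (ht : 0 < t) (y₁ y₂ : ℝ)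
    (h1 : y₁ ∈ Set.Ioo (-(1 / 4) : ℝ) 0) (h2 : y₂ ∈ Set.Ioo (-(1 / 4) : ℝ) 0)
    (hne : y₁ ≠ y₂) (x₁ x₂ : ℝ)
    (hx1 : x₁ = 4 * t / (1 - 16 * y₁ ^ 2)) (hx2 : x₂ = 4 * t / (1 - 16 * y₂ ^ 2)) :
    ((1 - 2 * t / x₁ - 2 * t / x₂) / (32 * (x₁ - x₂) ^ 2 * y₁ * y₂) +
        1 / (2 * (x₁ - x₂) ^ 2)) *
      (128 * t * y₁ / (1 - 16 * y₁ ^ 2) ^ 2) * (128 * t * y₂ / (1 - 16 * y₂ ^ 2) ^ 2) =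
    1 / (y₁ - y₂) ^ 2 := by
  obtain ⟨hl₁, hu₁⟩ := h1
  obtain ⟨hl₂, hu₂⟩ := h2
  subst hx1 hx2
  exact SpectralCurve.corrected_two_point_mul_jacobians ht.ne' hu₁.ne hu₂.ne
    (by nlinarith) (by nlinarith) (sub_ne_zero.mpr hne) (by linarith)
end
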